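/- arXiv:2407.06777 — 7 statements merged into one kernel-verified Lean document; each statement's English description precedes it below -/
import Mathlib

section
/- Let H = (V, E) be a finite hypergraph. If the sum over all edges e ∈ E of 2^(−|e|) is strictly less than 1/2, then Breaker has a winning strategy in the Maker-Breaker game on H (with Maker moving first). -/
variable {α : Type*} [DecidableEq α]

lemma card_sdiff_pair_lt {U : Finset α} {x y : α} (hx : x ∈ U) :
    (U \ {x, y}).card < U.card :=
  lt_of_le_of_lt
    (Finset.card_le_card (by
      intro a ha
      simp only [Finset.mem_sdiff, Finset.mem_insert, Finset.mem_singleton,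
        Finset.mem_erase] at ha ⊢
      tauto))
    (Finset.card_erase_lt_of_mem hx)

/-- Maker-Breaker game played on the edge set `E`, with Maker to move: Breaker has a winning
strategy from the position in which `U` is the set of unclaimed vertices and `M` is the set of
vertices already claimed by Maker.  Maker and Breaker alternately claim an unclaimed vertex
(Maker first); Maker wins if at the end her vertices contain an edge of `E`, and Breaker wins
otherwise. -/
def MBBreakerWins (E : Set (Finset α)) (U M : Finset α) : Prop :=
  if _h : 2 ≤ U.card then
    ∀ x ∈ U, ∃ y ∈ U.erase x, MBBreakerWins E ((U.erase x).erase y) (insert x M)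
  else ∀ e ∈ E, ¬ e ⊆ M ∪ U
termination_by U.card
decreasing_by all_goals
  exact lt_of_le_of_lt Finset.card_erase_le (Finset.card_erase_lt_of_mem (by assumption))

/-- The Erdős–Selfridge potential of a position. -/
noncomputable def ESpot (E : Finset (Finset α)) (U M : Finset α) : ℝ :=
  ∑ e ∈ E.filter (fun e => e ⊆ M ∪ U), (2 : ℝ) ^ (-((e \ M).card : ℤ))

lemma ESpot_nonneg (E : Finset (Finset α)) (U M : Finset α) : 0 ≤ ESpot E U M :=
  Finset.sum_nonneg fun _ _ => zpow_nonneg (by norm_num) _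

lemma one_le_ESpot_empty (E : Finset (Finset α)) (M : Finset α) {e : Finset α}
    (he : e ∈ E) (hsub : e ⊆ M) : (1 : ℝ) ≤ ESpot E ∅ M := by
  have hmem : e ∈ E.filter (fun e => e ⊆ M ∪ (∅ : Finset α)) := by
    simp [Finset.mem_filter, he, hsub]
  have h := Finset.single_le_sum (f := fun e : Finset α => (2 : ℝ) ^ (-((e \ M).card : ℤ)))
    (fun i _ => zpow_nonneg (by norm_num) _) hmem
  have hz : e \ M = ∅ := Finset.sdiff_eq_empty_iff_subset.mpr hsub
  simpa [ESpot, hz] using h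

lemma ESpot_key (E : Finset (Finset α)) (n : ℕ) : ∀ (U M : Finset α), U.card = n →
    Disjoint U M → ESpot E U M < 1 →
    (∀ x ∈ U, ESpot E (U.erase x) (insert x M) < 1) →
    MBBreakerWins (↑E : Set (Finset α)) U M := by
  induction n using Nat.strong_induction_on with
  | _ n IH =>
  intro U M hcard hd h1 h2
  rw [MBBreakerWins]
  split_ifs with hU
  · -- main case: at least two unclaimed vertices
    intro x hx
    set M₁ := insert x M with hM₁
    set U₁ := U.erase x with hU₁def
    have hdx : Disjoint U₁ M₁ :=
      Finset.disjoint_insert_right.mpr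
        ⟨Finset.notMem_erase _ _, hd.mono_left (Finset.erase_subset _ _)⟩
    have hpot1 : ESpot E U₁ M₁ < 1 := h2 x hx
    have hcardU₁ : U₁.card = U.card - 1 := Finset.card_erase_of_mem hx
    have hU₁ne : U₁.Nonempty := by
      rw [← Finset.card_pos, hcardU₁]; omega
    obtain ⟨y, hy, hymax⟩ := U₁.exists_max_image
      (fun y => ∑ e ∈ E.filter (fun e => e ⊆ M₁ ∪ U₁ ∧ y ∈ e),
        (2 : ℝ) ^ (-((e \ M₁).card : ℤ))) hU₁ne
    refine ⟨y, hy, ?_⟩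
    set f : α → ℝ := fun y => ∑ e ∈ E.filter (fun e => e ⊆ M₁ ∪ U₁ ∧ y ∈ e),
        (2 : ℝ) ^ (-((e \ M₁).card : ℤ)) with hf
    set U₂ := U₁.erase y with hU₂def
    have hyM₁ : y ∉ M₁ := fun hmem => Finset.disjoint_left.mp hdx hy hmem
    have hd₂ : Disjoint U₂ M₁ := hdx.mono_left (Finset.erase_subset _ _)
    -- splitting the potential after Maker's move by whether the edge contains y
    have hunion : M₁ ∪ U₂ = (M₁ ∪ U₁).erase y := by
      rw [Finset.erase_union_distrib, Finset.erase_eq_of_notMem hyM₁]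
    have hfilter : E.filter (fun e => e ⊆ M₁ ∪ U₂)
        = E.filter (fun e => e ⊆ M₁ ∪ U₁ ∧ y ∉ e) := by
      apply Finset.filter_congr
      intro e _
      rw [hunion, Finset.subset_erase]
    have hsplit : ESpot E U₂ M₁ + f y = ESpot E U₁ M₁ := by
      have hkey := Finset.sum_filter_add_sum_filter_not
        (E.filter (fun e => e ⊆ M₁ ∪ U₁)) (fun e => y ∈ e)
        (fun e => (2 : ℝ) ^ (-((e \ M₁).card : ℤ)))
      rw [Finset.filter_filter, Finset.filter_filter] at hkey
      simp only [ESpot, hf]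
      rw [hfilter]
      linarith [hkey]
    have hfy0 : 0 ≤ f y := Finset.sum_nonneg fun _ _ => zpow_nonneg (by norm_num) _
    have hpotU₂ : ESpot E U₂ M₁ < 1 := by linarith
    -- the bound after Breaker's reply and Maker's next move
    have hbound : ∀ z ∈ U₂, ESpot E (U₂.erase z) (insert z M₁) < 1 := by
      intro z hz
      have hzU₁ : z ∈ U₁ := Finset.mem_of_mem_erase hz
      have hzM₁ : z ∉ M₁ := fun hmem => Finset.disjoint_left.mp hdx hzU₁ hmem
      have hun2 : insert z M₁ ∪ U₂.erase z = M₁ ∪ U₂ := by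
        rw [Finset.insert_union, ← Finset.union_insert, Finset.insert_erase hz]
      have hfe : E.filter (fun e => e ⊆ insert z M₁ ∪ U₂.erase z)
          = E.filter (fun e => e ⊆ M₁ ∪ U₂) := by rw [hun2]
      have hsum : ESpot E (U₂.erase z) (insert z M₁)
          = ∑ e ∈ E.filter (fun e => e ⊆ M₁ ∪ U₂),
              ((2 : ℝ) ^ (-((e \ M₁).card : ℤ))
                + if z ∈ e then (2 : ℝ) ^ (-((e \ M₁).card : ℤ)) else 0) := by
        rw [ESpot, hfe]
        apply Finset.sum_congr rfl
        intro e _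
        by_cases hze : z ∈ e
        · have hz' : z ∈ e \ M₁ := Finset.mem_sdiff.mpr ⟨hze, hzM₁⟩
          have hone : 1 ≤ (e \ M₁).card := Finset.card_pos.mpr ⟨z, hz'⟩
          have hc : ((e \ insert z M₁).card : ℤ) = ((e \ M₁).card : ℤ) - 1 := by
            rw [Finset.sdiff_insert, Finset.card_erase_of_mem hz']
            omega
          rw [hc]
          simp only [hze, if_true]
          rw [show -(((e \ M₁).card : ℤ) - 1) = -((e \ M₁).card : ℤ) + 1 by ring,
            zpow_add₀ (two_ne_zero), zpow_one]
          ring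
        · have : e \ insert z M₁ = e \ M₁ := by
            rw [Finset.sdiff_insert, Finset.erase_eq_of_notMem
              (fun hmem => hze (Finset.mem_sdiff.mp hmem).1)]
          rw [this]
          simp [hze]
      rw [hsum, Finset.sum_add_distrib, ← Finset.sum_filter, Finset.filter_filter]
      have ht : ∑ e ∈ E.filter (fun e => e ⊆ M₁ ∪ U₂ ∧ z ∈ e),
          (2 : ℝ) ^ (-((e \ M₁).card : ℤ)) ≤ f z := by
        apply Finset.sum_le_sum_of_subset_of_nonneg
        · intro e he
          simp only [Finset.mem_filter] at he ⊢
          exact ⟨he.1, he.2.1.trans (Finset.union_subset_union_right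
            (Finset.erase_subset _ _)), he.2.2⟩
        · intro i _ _; exact zpow_nonneg (by norm_num) _
      have hfz : f z ≤ f y := hymax z hzU₁
      have hESpot2 : ∑ e ∈ E.filter (fun e => e ⊆ M₁ ∪ U₂),
          (2 : ℝ) ^ (-((e \ M₁).card : ℤ)) = ESpot E U₂ M₁ := rfl
      rw [hESpot2]
      linarith
    -- conclude by the inductive hypothesis
    have hc2 : U₂.card = U₁.card - 1 := Finset.card_erase_of_mem hy
    have hcard2 : U₂.card < n := by omega
    exact IH U₂.card hcard2 U₂ M₁ rfl hd₂ hpotU₂ hbound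
  · -- base case: at most one unclaimed vertex
    intro e he hsub
    rcases U.eq_empty_or_nonempty with rfl | ⟨x, hx⟩
    · exact absurd h1 (not_lt.mpr (one_le_ESpot_empty E M he (by simpa using hsub)))
    · have hUx : U = {x} := by
        apply Finset.eq_singleton_iff_unique_mem.mpr
        refine ⟨hx, fun b hb => ?_⟩
        by_contra hbx
        exact hU (Finset.one_lt_card.mpr ⟨b, hb, x, hx, hbx⟩)
      have h2' := h2 x hx
      rw [hUx, Finset.erase_singleton] at h2'
      rw [hUx] at hsub
      have hsub' : e ⊆ insert x M := by
        intro a ha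
        rcases Finset.mem_union.mp (hsub ha) with h | h
        · exact Finset.mem_insert_of_mem h
        · simp only [Finset.mem_singleton] at h; exact h ▸ Finset.mem_insert_self _ _
      exact absurd h2' (not_lt.mpr (one_le_ESpot_empty E (insert x M) he hsub'))

/-- **Erdős–Selfridge criterion.**  If `H = (V, E)` is a finite hypergraph with
`∑_{e ∈ E} 2^{-|e|} < 1/2`, then Breaker has a winning strategy in the Maker-Breaker game on
`H` (Maker moving first). -/
theorem erdos_selfridge (V : Finset α) (E : Finset (Finset α)) (hE : ∀ e ∈ E, e ⊆ V)
    (hsum : ∑ e ∈ E, (2 : ℝ) ^ (-(e.card : ℤ)) < 1 / 2) :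
    MBBreakerWins (↑E : Set (Finset α)) V ∅ := by
  refine ESpot_key E V.card V ∅ rfl (by simp) ?_ ?_
  · have hfe : E.filter (fun e => e ⊆ (∅ : Finset α) ∪ V) = E :=
      Finset.filter_true_of_mem (fun e he => by simpa using hE e he)
    have : ESpot E V ∅ = ∑ e ∈ E, (2 : ℝ) ^ (-(e.card : ℤ)) := by
      rw [ESpot, hfe]
      apply Finset.sum_congr rfl
      intro e _
      simp
    rw [this]; linarith
  · intro x hx
    have hterm : ∀ e ∈ E, (2 : ℝ) ^ (-((e \ insert x ∅).card : ℤ))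
        ≤ 2 * (2 : ℝ) ^ (-(e.card : ℤ)) := by
      intro e _
      have h1 : e \ insert x ∅ = e.erase x := by
        ext a; simp [Finset.mem_sdiff, Finset.mem_erase, and_comm]
      have h2 : e.card - 1 ≤ (e.erase x).card := Finset.pred_card_le_card_erase
      have h3 : (-((e \ insert x ∅).card : ℤ)) ≤ -(e.card : ℤ) + 1 := by
        rw [h1]
        have h4 : (e.erase x).card ≤ e.card := Finset.card_erase_le
        omega
      calc (2 : ℝ) ^ (-((e \ insert x ∅).card : ℤ))
          ≤ (2 : ℝ) ^ (-(e.card : ℤ) + 1) := zpow_le_zpow_right₀ one_le_two h3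
        _ = 2 * (2 : ℝ) ^ (-(e.card : ℤ)) := by
            rw [zpow_add₀ (two_ne_zero), zpow_one]; ring
    calc ESpot E (V.erase x) (insert x ∅)
        ≤ ∑ e ∈ E, (2 : ℝ) ^ (-((e \ insert x ∅).card : ℤ)) := by
          apply Finset.sum_le_sum_of_subset_of_nonneg (Finset.filter_subset _ _)
          intro i _ _; exact zpow_nonneg (by norm_num) _
      _ ≤ ∑ e ∈ E, 2 * (2 : ℝ) ^ (-(e.card : ℤ)) := Finset.sum_le_sum hterm
      _ = 2 * ∑ e ∈ E, (2 : ℝ) ^ (-(e.card : ℤ)) := by rw [Finset.mul_sum]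
      _ < 1 := by linarith
end

section
/- Let ψ = ∃x_1∀y_1⋯∃x_n∀y_n φ be a quantified Boolean formula where φ is a 3-CNF over the variables x_1,…,x_n,y_1,…,y_n. Let y_0, z_0,…,z_n, t_1,…,t_n be new variables, let X' = {(z_0,y_0)} ∪ {(x_i,t_i) : 1 ≤ i ≤ n} ∪ {(z_i,y_i) : 1 ≤ i ≤ n}, and let φ' = φ ∧ ⋀_{i=1}^n ((y_{i−1} ∨ t_i ∨ z_i) ∧ (¬y_{i−1} ∨ ¬t_i ∨ z_i) ∧ (¬y_{i−1} ∨ t_i ∨ ¬z_i) ∧ (y_{i−1} ∨ ¬t_i ∨ ¬z_i)). Then Satisfier has a winning strategy in the 3-QBF game on ψ if and only if Satisfier has a winning strategy in the Paired SAT game on (φ', X'). -/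
variable {α : Type*} [DecidableEq α]

/-- A literal over the variable type `ν`: a variable together with a polarity. -/
abbrev Lit (ν : Type*) := ν × Bool

/-- A clause with exactly three literals. -/
abbrev Clause3 (ν : Type*) := Lit ν × Lit ν × Lit ν

/-- A 3-CNF formula: a list of three-literal clauses. -/
abbrev CNF3 (ν : Type*) := List (Clause3 ν)

def evalLit {ν : Type*} (v : ν → Bool) (l : Lit ν) : Prop := v l.1 = l.2

def evalClause {ν : Type*} (v : ν → Bool) (c : Clause3 ν) : Prop :=
  evalLit v c.1 ∨ evalLit v c.2.1 ∨ evalLit v c.2.2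

def evalCNF {ν : Type*} (v : ν → Bool) (φ : CNF3 ν) : Prop := ∀ c ∈ φ, evalClause v c

/-- Paired SAT game on the pair-index type `I` with winning condition `φ` (a predicate on the
final assignments `x, y` of the first and second members of the pairs): Satisfier has a winning
strategy from the position in which `R` is the set of indices not yet chosen and `x, y` record
the values assigned so far.  At each turn Satisfier picks an unchosen index `i` and a value for
`x i`, then Falsifier picks a value for `y i`; when all indices are exhausted Satisfier wins
iff `φ x y` holds. -/
def PSSatWins {I : Type*} [DecidableEq I] (φ : (I → Bool) → (I → Bool) → Prop)
    (R : Finset I) (x y : I → Bool) : Prop :=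
  if _h : R.Nonempty then
    ∃ i, ∃ _hi : i ∈ R, ∃ b : Bool, ∀ c : Bool,
      PSSatWins φ (R.erase i) (Function.update x i b) (Function.update y i c)
  else φ x y
termination_by R.card
decreasing_by all_goals exact Finset.card_erase_lt_of_mem (by assumption)

/-- Satisfier has a winning strategy in the 3-QBF game on
`∃ x₀ ∀ y₀ ∃ x₁ ∀ y₁ ⋯ ∃ x_{n-1} ∀ y_{n-1}, φ`, where in `φ` the variable `xᵢ` is `Sum.inl i`
and `yᵢ` is `Sum.inr i`: Satisfier has, for each `i`, a choice of value for `xᵢ` depending on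
the values of `y_j` for `j < i`, such that whatever values Falsifier picks for the `yᵢ`'s, the
resulting assignment satisfies `φ`. -/
def QBFSatWins (n : ℕ) (φ : CNF3 (Fin n ⊕ Fin n)) : Prop :=
  ∃ f : (i : Fin n) → (Fin i.1 → Bool) → Bool,
    ∀ y : Fin n → Bool,
      evalCNF (Sum.elim (fun i => f i (fun j => y ⟨j.1, j.2.trans i.2⟩)) y) φ

/-- The index type of the pairs of the Paired SAT instance: `none` indexes the pair
`(z₀, y₀)`, `some (Sum.inl i)` the pair `(xᵢ, tᵢ)`, and `some (Sum.inr i)` the pair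
`(zᵢ₊₁, yᵢ₊₁)` (for `i : Fin n`, in `0`-based indexing). -/
abbrev PairIdx (n : ℕ) := Option (Fin n ⊕ Fin n)

/-- Given the Falsifier assignment `Y` of the Paired SAT instance, `prevY n Y i` is the value
of the variable `y` preceding the `i`-th XOR clause: `y₀ = Y none` when `i = 0` and
`y_i = Y (some (Sum.inr (i - 1)))` otherwise. -/
def prevY (n : ℕ) (Y : PairIdx n → Bool) (i : Fin n) : Bool :=
  if i.1 = 0 then Y none
  else Y (some (Sum.inr ⟨i.1 - 1, lt_of_le_of_lt (Nat.sub_le _ _) i.2⟩))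

/-- The three-variable XOR `a ⊕ b ⊕ c`, written as the conjunction of its four clauses. -/
def xor3 (a b c : Bool) : Prop :=
  (a = true ∨ b = true ∨ c = true) ∧ (¬a = true ∨ ¬b = true ∨ c = true) ∧
    (¬a = true ∨ b = true ∨ ¬c = true) ∧ (a = true ∨ ¬b = true ∨ ¬c = true)

/-- The winning condition `φ'` of the Paired SAT instance associated with the 3-QBF formula
`ψ = ∃x₁∀y₁⋯∃xₙ∀yₙ φ`:  `X` assigns the first components `z₀, xᵢ, zᵢ` of the pairs and `Y`
the second components `y₀, tᵢ, yᵢ`; the condition is that `φ` is satisfied by the values of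
the `xᵢ`'s and `yᵢ`'s and that each XOR clause `y_{i-1} ⊕ t_i ⊕ z_i` holds. -/
def pairedFormula (n : ℕ) (φ : CNF3 (Fin n ⊕ Fin n)) (X Y : PairIdx n → Bool) : Prop :=
  evalCNF (Sum.elim (fun i => X (some (Sum.inl i))) (fun i => Y (some (Sum.inr i)))) φ ∧
    ∀ i : Fin n, xor3 (prevY n Y i) (Y (some (Sum.inl i))) (X (some (Sum.inr i)))

/-!
The XOR clause `y_{i-1} ⊕ tᵢ ⊕ zᵢ` forces the order of play. If Satisfier wins the QBF game,
she plays `(z₀, y₀)` first and then, for `i = 1, …, n`, the pair `(xᵢ, tᵢ)` as in the QBF game,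
followed by `(zᵢ, yᵢ)` with `zᵢ` chosen to satisfy the XOR clause, which is possible since
`y_{i-1}` and `tᵢ` are known by then. Conversely, if Satisfier ever fixes `zᵢ` while `y_{i-1}`
or `tᵢ` is unassigned, Falsifier later sets that variable so as to violate the XOR clause. So
Satisfier has to play the pairs `(zᵢ, yᵢ)` in increasing order, each after `(xᵢ, tᵢ)`, and
Falsifier answers each `yᵢ` as a winning Falsifier would in the QBF game. Winning strategies of
the QBF game are matched with its alternating-quantifier form by Skolemization.
-/

section PairedGame

variable {I : Type*} [DecidableEq I] {ψ : (I → Bool) → (I → Bool) → Prop}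

theorem psSatWins_empty (x y : I → Bool) : PSSatWins ψ ∅ x y ↔ ψ x y := by
  rw [PSSatWins, dif_neg Finset.not_nonempty_empty]

theorem psSatWins_iff_of_nonempty {R : Finset I} (hR : R.Nonempty) (x y : I → Bool) :
    PSSatWins ψ R x y ↔ ∃ i ∈ R, ∃ b, ∀ c,
      PSSatWins ψ (R.erase i) (Function.update x i b) (Function.update y i c) := by
  rw [PSSatWins, dif_pos hR]
  simp only [exists_prop]

theorem PSSatWins.of_move {R : Finset I} {i : I} (hi : i ∈ R) {x y : I → Bool} {b : Bool}
    (h : ∀ c, PSSatWins ψ (R.erase i) (Function.update x i b) (Function.update y i c)) :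
    PSSatWins ψ R x y :=
  (psSatWins_iff_of_nonempty ⟨i, hi⟩ x y).2 ⟨i, hi, b, h⟩

/-- Either of `y p`, `y q` alone can spoil `C`: whichever of them is played last, Falsifier
sets it against `C`. -/
theorem not_psSatWins_of_spoilable {C : Bool → Bool → Bool → Prop} {r p q : I}
    (hC₁ : ∀ w v, ∃ u, ¬C w u v) (hC₂ : ∀ w u, ∃ v, ¬C w u v) (hpq : p ≠ q)
    (hψ : ∀ x y, ψ x y → C (x r) (y p) (y q)) (R : Finset I) (x y : I → Bool) (hr : r ∉ R)
    (h : p ∈ R ∨ q ∈ R ∨ ¬C (x r) (y p) (y q)) : ¬PSSatWins ψ R x y := by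
  rcases R.eq_empty_or_nonempty with rfl | hR
  · simp only [Finset.notMem_empty, false_or] at h
    rw [psSatWins_empty]
    exact fun hxy => h (hψ x y hxy)
  rw [psSatWins_iff_of_nonempty hR]
  rintro ⟨i, hi, b, hwin⟩
  have hri : r ≠ i := (ne_of_mem_of_not_mem hi hr).symm
  obtain ⟨c, hc⟩ : ∃ c, p ∈ R.erase i ∨ q ∈ R.erase i ∨
      ¬C (Function.update x i b r) (Function.update y i c p) (Function.update y i c q) := by
    simp only [Finset.mem_erase, Function.update_of_ne hri]
    by_cases hip : i = p
    · subst hip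
      obtain ⟨u, hu⟩ := hC₁ (x r) (y q)
      refine ⟨u, ?_⟩
      simp only [Function.update_self, Function.update_of_ne hpq.symm]
      tauto
    by_cases hiq : i = q
    · subst hiq
      obtain ⟨v, hv⟩ := hC₂ (x r) (y p)
      refine ⟨v, ?_⟩
      simp only [Function.update_self, Function.update_of_ne hpq]
      tauto
    refine ⟨false, ?_⟩
    simp only [Function.update_of_ne (Ne.symm hip), Function.update_of_ne (Ne.symm hiq)]
    tauto
  exact not_psSatWins_of_spoilable hC₁ hC₂ hpq hψ (R.erase i) _ _
    (fun h' => hr (Finset.mem_of_mem_erase h')) hc (hwin c)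
termination_by R.card
decreasing_by exact Finset.card_erase_lt_of_mem hi

end PairedGame

section QBFGame

variable {n : ℕ} (P : (Fin n → Bool) → (Fin n → Bool) → Prop)

/-- Satisfier wins the QBF game `∃ xₖ ∀ yₖ ⋯ ∃ x_{n-1} ∀ y_{n-1}, P x y` from round `k` on, the
values of `x` and `y` below `k` having been played already. -/
def QBFSatWinsFrom (k : ℕ) (x y : Fin n → Bool) : Prop :=
  if h : k < n then
    ∃ b, ∀ c, QBFSatWinsFrom (k + 1) (Function.update x ⟨k, h⟩ b) (Function.update y ⟨k, h⟩ c)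
  else P x y
termination_by n - k

variable {P}

theorem qbfSatWinsFrom_of_lt {k : ℕ} (h : k < n) (x y : Fin n → Bool) :
    QBFSatWinsFrom P k x y ↔ ∃ b, ∀ c,
      QBFSatWinsFrom P (k + 1) (Function.update x ⟨k, h⟩ b) (Function.update y ⟨k, h⟩ c) := by
  rw [QBFSatWinsFrom, dif_pos h]

theorem qbfSatWinsFrom_of_le {k : ℕ} (h : n ≤ k) (x y : Fin n → Bool) :
    QBFSatWinsFrom P k x y ↔ P x y := by
  rw [QBFSatWinsFrom, dif_neg (not_lt.2 h)]

theorem update_agree_below_succ {β : Type*} {k : ℕ} (h : k < n) {x x' : Fin n → β}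
    (hx : ∀ j : Fin n, j.1 < k → x j = x' j) (b : β) :
    ∀ j : Fin n, j.1 < k + 1 → Function.update x ⟨k, h⟩ b j = Function.update x' ⟨k, h⟩ b j := by
  intro j hj
  rcases eq_or_ne j ⟨k, h⟩ with rfl | hjk
  · simp only [Function.update_self]
  · have : j.1 ≠ k := fun e => hjk (Fin.ext e)
    rw [Function.update_of_ne hjk, Function.update_of_ne hjk, hx j (by omega)]

theorem qbfSatWinsFrom_congr {k : ℕ} {x y x' y' : Fin n → Bool}
    (hx : ∀ j : Fin n, j.1 < k → x j = x' j) (hy : ∀ j : Fin n, j.1 < k → y j = y' j) :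
    QBFSatWinsFrom P k x y ↔ QBFSatWinsFrom P k x' y' := by
  by_cases h : k < n
  · simp only [qbfSatWinsFrom_of_lt h]
    exact exists_congr fun b => forall_congr' fun c => qbfSatWinsFrom_congr
      (update_agree_below_succ h hx b) (update_agree_below_succ h hy c)
  · have hk : n ≤ k := not_lt.1 h
    rw [qbfSatWinsFrom_of_le hk, qbfSatWinsFrom_of_le hk,
      funext fun j => hx j (by omega), funext fun j => hy j (by omega)]
termination_by n - k

theorem qbfSatWinsFrom_update_left {k : ℕ} {m : Fin n} (hm : k ≤ m.1) (b : Bool)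
    (x y : Fin n → Bool) :
    QBFSatWinsFrom P k (Function.update x m b) y ↔ QBFSatWinsFrom P k x y :=
  qbfSatWinsFrom_congr (fun j hj => Function.update_of_ne (by omega) _ _) fun _ _ => rfl

theorem qbfSatWinsFrom_of_strategy (f : (i : Fin n) → (Fin i → Bool) → Bool)
    (hf : ∀ y, P (fun i => f i (Fin.take i i.2.le y)) y) (k : ℕ) (x y : Fin n → Bool)
    (hx : ∀ j : Fin n, j.1 < k → x j = f j (Fin.take j j.2.le y)) :
    QBFSatWinsFrom P k x y := by
  by_cases h : k < n
  · rw [qbfSatWinsFrom_of_lt h]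
    refine ⟨f ⟨k, h⟩ (Fin.take k h.le y), fun c => qbfSatWinsFrom_of_strategy f hf (k + 1) _ _ ?_⟩
    intro j hj
    rw [Fin.take_update_of_ge _ _ _ _ (by simpa using Nat.le_of_lt_succ hj)]
    rcases eq_or_ne j ⟨k, h⟩ with rfl | hjk
    · simp only [Function.update_self]
    · have : j.1 ≠ k := fun e => hjk (Fin.ext e)
      rw [Function.update_of_ne hjk, hx j (by omega)]
  · rw [qbfSatWinsFrom_of_le (not_lt.1 h), funext fun j => hx j (by omega)]
    exact hf y
termination_by n - k

theorem exists_strategy_of_qbfSatWinsFrom (k : ℕ) (x y : Fin n → Bool)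
    (hw : QBFSatWinsFrom P k x y) :
    ∃ f : (i : Fin n) → (Fin i → Bool) → Bool, ∀ y' : Fin n → Bool,
      (∀ j : Fin n, j.1 < k → y' j = y j) →
        P (fun i => if i.1 < k then x i else f i (Fin.take i i.2.le y')) y' := by
  by_cases h : k < n
  · obtain ⟨b, hb⟩ := (qbfSatWinsFrom_of_lt h x y).1 hw
    choose F hF using fun c => exists_strategy_of_qbfSatWinsFrom (k + 1) _ _ (hb c)
    refine ⟨fun i yi => if hki : k < i.1 then F (yi ⟨k, hki⟩) i yi else b, fun y' hy' => ?_⟩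
    have hagree : ∀ j : Fin n, j.1 < k + 1 → y' j = Function.update y ⟨k, h⟩ (y' ⟨k, h⟩) j := by
      simpa only [Function.update_eq_self] using update_agree_below_succ h hy' (y' ⟨k, h⟩)
    convert hF (y' ⟨k, h⟩) y' hagree using 2 with i
    rcases lt_trichotomy i.1 k with hik | hik | hik
    · have hne : i ≠ ⟨k, h⟩ := fun e => by simp [e] at hik
      simp [hik, hne, Nat.lt_succ_of_lt hik]
    · obtain rfl : i = ⟨k, h⟩ := Fin.ext hik
      simp
    · simp [hik, hik.not_gt, (Nat.succ_le_of_lt hik).not_gt]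
  · refine ⟨fun _ _ => false, fun y' hy' => ?_⟩
    have hk : n ≤ k := not_lt.1 h
    rw [qbfSatWinsFrom_of_le hk] at hw
    convert hw using 1
    · exact funext fun i => if_pos (by omega)
    · exact funext fun j => hy' j (by omega)
termination_by n - k

theorem exists_strategy_iff_qbfSatWinsFrom (x y : Fin n → Bool) :
    (∃ f : (i : Fin n) → (Fin i → Bool) → Bool, ∀ y, P (fun i => f i (Fin.take i i.2.le y)) y) ↔
      QBFSatWinsFrom P 0 x y := by
  refine ⟨fun ⟨f, hf⟩ => qbfSatWinsFrom_of_strategy f hf 0 x y (by simp), fun hw => ?_⟩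
  obtain ⟨f, hf⟩ := exists_strategy_of_qbfSatWinsFrom 0 x y hw
  exact ⟨f, fun y' => by simpa using hf y' (by simp)⟩

end QBFGame

section Reduction

variable {n : ℕ}

theorem xor3_not_xor (a b : Bool) : xor3 a b (!(a ^^ b)) := by
  cases a <;> cases b <;> simp [xor3]

theorem exists_not_xor3_left (b c : Bool) : ∃ a, ¬xor3 a b c :=
  ⟨b ^^ c, by cases b <;> cases c <;> simp [xor3]⟩

theorem exists_not_xor3_mid (a c : Bool) : ∃ b, ¬xor3 a b c :=
  ⟨a ^^ c, by cases a <;> cases c <;> simp [xor3]⟩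

def qbfX (X : PairIdx n → Bool) : Fin n → Bool := fun i => X (some (Sum.inl i))

def qbfY (Y : PairIdx n → Bool) : Fin n → Bool := fun i => Y (some (Sum.inr i))

theorem qbfX_update_inl (X : PairIdx n → Bool) (m : Fin n) (b : Bool) :
    qbfX (Function.update X (some (Sum.inl m)) b) = Function.update (qbfX X) m b :=
  Function.update_comp_eq_of_injective X (Option.some_injective _ |>.comp Sum.inl_injective) m b

theorem qbfX_update_of_ne {X : PairIdx n → Bool} {a : PairIdx n}
    (ha : ∀ m, a ≠ some (Sum.inl m)) (b : Bool) : qbfX (Function.update X a b) = qbfX X :=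
  Function.update_comp_eq_of_forall_ne X b fun m => (ha m).symm

theorem qbfY_update_inr (Y : PairIdx n → Bool) (m : Fin n) (c : Bool) :
    qbfY (Function.update Y (some (Sum.inr m)) c) = Function.update (qbfY Y) m c :=
  Function.update_comp_eq_of_injective Y (Option.some_injective _ |>.comp Sum.inr_injective) m c

theorem qbfY_update_of_ne {Y : PairIdx n → Bool} {a : PairIdx n}
    (ha : ∀ m, a ≠ some (Sum.inr m)) (c : Bool) : qbfY (Function.update Y a c) = qbfY Y :=
  Function.update_comp_eq_of_forall_ne Y c fun m => (ha m).symm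

def prevIdx (i : Fin n) : PairIdx n :=
  if i.1 = 0 then none else some (Sum.inr ⟨i.1 - 1, lt_of_le_of_lt (Nat.sub_le _ _) i.2⟩)

theorem prevY_eq (Y : PairIdx n → Bool) (i : Fin n) : prevY n Y i = Y (prevIdx i) := by
  unfold prevY prevIdx
  split_ifs <;> rfl

theorem prevIdx_ne_inl (i m : Fin n) : prevIdx i ≠ some (Sum.inl m) := by
  unfold prevIdx
  split_ifs <;> simp

theorem prevIdx_ne_inr_of_le {i m : Fin n} (h : i.1 ≤ m.1) : prevIdx i ≠ some (Sum.inr m) := by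
  unfold prevIdx
  split_ifs <;> simp [Fin.ext_iff]
  omega

theorem pairedFormula_iff (φ : CNF3 (Fin n ⊕ Fin n)) (X Y : PairIdx n → Bool) :
    pairedFormula n φ X Y ↔ evalCNF (Sum.elim (qbfX X) (qbfY Y)) φ ∧
      ∀ i, xor3 (Y (prevIdx i)) (Y (some (Sum.inl i))) (X (some (Sum.inr i))) := by
  simp only [pairedFormula, prevY_eq]
  rfl

/-- The round of the game in which the pair is played, `(z₀, y₀)` being played first. -/
@[simp]
def stage : PairIdx n → ℕ
  | none => 0
  | some (Sum.inl m) => m.1 + 1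
  | some (Sum.inr m) => m.1 + 1

theorem stage_le : ∀ a : PairIdx n, stage a ≤ n
  | none => Nat.zero_le n
  | some (Sum.inl m) => m.2
  | some (Sum.inr m) => m.2

def pairsFrom (k : ℕ) : Finset (PairIdx n) := Finset.univ.filter (k < stage ·)

@[simp]
theorem mem_pairsFrom {k : ℕ} {a : PairIdx n} : a ∈ pairsFrom k ↔ k < stage a :=
  Finset.mem_filter.trans (and_iff_right (Finset.mem_univ a))

theorem pairsFrom_eq_empty {k : ℕ} (hk : n ≤ k) : pairsFrom k = (∅ : Finset (PairIdx n)) :=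
  Finset.eq_empty_of_forall_notMem fun a ha => by
    have := stage_le a
    have := mem_pairsFrom.1 ha
    omega

end Reduction

section Strategies

variable {n : ℕ} (φ : CNF3 (Fin n ⊕ Fin n))

theorem psSatWins_of_qbfSatWinsFrom (k : ℕ) (X Y : PairIdx n → Bool)
    (hxor : ∀ j : Fin n, j.1 < k →
      xor3 (Y (prevIdx j)) (Y (some (Sum.inl j))) (X (some (Sum.inr j))))
    (hw : QBFSatWinsFrom (fun x y => evalCNF (Sum.elim x y) φ) k (qbfX X) (qbfY Y)) :
    PSSatWins (pairedFormula n φ) (pairsFrom k) X Y := by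
  by_cases h : k < n
  swap
  · rw [pairsFrom_eq_empty (not_lt.1 h), psSatWins_empty, pairedFormula_iff]
    exact ⟨(qbfSatWinsFrom_of_le (not_lt.1 h) _ _).1 hw, fun j => hxor j (by omega)⟩
  obtain ⟨b, hb⟩ := (qbfSatWinsFrom_of_lt h _ _).1 hw
  set K : Fin n := ⟨k, h⟩
  refine PSSatWins.of_move (i := some (Sum.inl K)) (by simp [K]) (b := b) fun t => ?_
  -- `z_{k+1}` satisfies the XOR clause `y_k ⊕ t_{k+1} ⊕ z_{k+1}`, whatever `y_{k+1}` will be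
  refine PSSatWins.of_move (i := some (Sum.inr K)) (by simp [K])
    (b := !(Y (prevIdx K) ^^ t)) fun c => ?_
  have hR : ((pairsFrom k).erase (some (Sum.inl K))).erase (some (Sum.inr K)) =
      pairsFrom (k + 1) := by
    ext a
    rcases a with _ | m | m <;> simp [K, Fin.ext_iff] <;> omega
  rw [hR]
  refine psSatWins_of_qbfSatWinsFrom (k + 1) _ _ (fun j hj => ?_) ?_
  · have hjk : j.1 ≤ k := Nat.le_of_lt_succ hj
    rw [Function.update_of_ne (prevIdx_ne_inr_of_le hjk),
      Function.update_of_ne (prevIdx_ne_inl j K), Function.update_of_ne (by simp)]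
    rcases hjk.lt_or_eq with hjk | hjk
    · have hjK : j ≠ K := fun e => by simp [e, K] at hjk
      rw [Function.update_of_ne (by simpa using hjK), Function.update_of_ne (by simpa using hjK),
        Function.update_of_ne (by simp)]
      exact hxor j hjk
    · obtain rfl : j = K := Fin.ext hjk
      rw [Function.update_self, Function.update_self]
      exact xor3_not_xor _ _
  · rw [qbfX_update_of_ne (by simp), qbfX_update_inl, qbfY_update_inr,
      qbfY_update_of_ne (by simp)]
    exact hb c
termination_by n - k

theorem not_psSatWins_of_xor_input_open (R : Finset (PairIdx n)) (X Y : PairIdx n → Bool)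
    (m : Fin n) (hm : some (Sum.inr m) ∉ R) (h : some (Sum.inl m) ∈ R ∨ prevIdx m ∈ R) :
    ¬PSSatWins (pairedFormula n φ) R X Y :=
  not_psSatWins_of_spoilable (C := fun w u v => xor3 u v w)
    (fun w v => exists_not_xor3_left v w) (fun w u => exists_not_xor3_mid u w)
    (prevIdx_ne_inl m m) (fun X Y hXY => ((pairedFormula_iff φ X Y).1 hXY).2 m) R X Y hm
    (by tauto)

theorem eq_of_inr_mem_of_prevIdx_notMem {k : ℕ} {R : Finset (PairIdx n)} {m : Fin n}
    (hR : ∀ m : Fin n, some (Sum.inr m) ∈ R ↔ k ≤ m.1) (hm : some (Sum.inr m) ∈ R)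
    (hprev : prevIdx m ∉ R) : k = m.1 := by
  have hkm := (hR m).1 hm
  by_contra hne
  refine hprev ?_
  rw [prevIdx, if_neg (by omega)]
  exact (hR _).2 (by simp only; omega)

theorem not_psSatWins_of_not_qbfSatWinsFrom (k : ℕ) (R : Finset (PairIdx n))
    (X Y : PairIdx n → Bool) (hR : ∀ m : Fin n, some (Sum.inr m) ∈ R ↔ k ≤ m.1)
    (hL : ∀ m : Fin n, m.1 < k → some (Sum.inl m) ∉ R)
    (hw : ¬QBFSatWinsFrom (fun x y => evalCNF (Sum.elim x y) φ) k (qbfX X) (qbfY Y)) :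
    ¬PSSatWins (pairedFormula n φ) R X Y := by
  rcases R.eq_empty_or_nonempty with rfl | hne
  · have hk : n ≤ k := not_lt.1 fun h => by simpa using (hR ⟨k, h⟩).2 le_rfl
    rw [psSatWins_empty, pairedFormula_iff]
    exact fun hXY => hw ((qbfSatWinsFrom_of_le hk _ _).2 hXY.1)
  rw [psSatWins_iff_of_nonempty hne]
  rintro ⟨i, hi, b, hwin⟩
  suffices ∃ c, ¬PSSatWins (pairedFormula n φ) (R.erase i) (Function.update X i b)
      (Function.update Y i c) from
    let ⟨c, hc⟩ := this; hc (hwin c)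
  rcases i with _ | m | m
  · refine ⟨false, not_psSatWins_of_not_qbfSatWinsFrom k _ _ _ (fun m => ?_)
      (fun m hm h => hL m hm (Finset.mem_of_mem_erase h)) ?_⟩
    · simpa using hR m
    · rwa [qbfX_update_of_ne (by simp), qbfY_update_of_ne (by simp)]
  · have hkm : k ≤ m.1 := not_lt.1 fun h => hL m h hi
    refine ⟨false, not_psSatWins_of_not_qbfSatWinsFrom k _ _ _ (fun m => ?_)
      (fun m hm h => hL m hm (Finset.mem_of_mem_erase h)) ?_⟩
    · simpa using hR m
    · rwa [qbfX_update_inl, qbfSatWinsFrom_update_left hkm, qbfY_update_of_ne (by simp)]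
  by_cases hspoil : some (Sum.inl m) ∈ R ∨ prevIdx m ∈ R
  · refine ⟨false, not_psSatWins_of_xor_input_open φ _ _ _ m (by simp) ?_⟩
    simpa [prevIdx_ne_inr_of_le le_rfl] using hspoil
  -- otherwise `(z_{m+1}, y_{m+1})` is the pair of the current round `k = m`, and Falsifier
  -- answers `y_{m+1}` as in the QBF game
  obtain ⟨hinl, hprev⟩ := not_or.1 hspoil
  obtain rfl : k = m.1 := eq_of_inr_mem_of_prevIdx_notMem hR hi hprev
  rw [qbfSatWinsFrom_of_lt m.2] at hw
  simp only [not_exists, not_forall] at hw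
  obtain ⟨c, hc⟩ := hw (qbfX X m)
  refine ⟨c, not_psSatWins_of_not_qbfSatWinsFrom (m.1 + 1) _ _ _ (fun m' => ?_)
    (fun m' hm' h => ?_) ?_⟩
  · simp only [Finset.mem_erase, hR, ne_eq, Option.some.injEq, Sum.inr.injEq, Fin.ext_iff]
    omega
  · rcases (Nat.lt_succ_iff.1 hm').lt_or_eq with hm' | hm'
    · exact hL m' hm' (Finset.mem_of_mem_erase h)
    · obtain rfl : m' = m := Fin.ext hm'
      exact hinl (Finset.mem_of_mem_erase h)
  · rw [qbfX_update_of_ne (by simp), qbfY_update_inr]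
    simpa only [Fin.eta, Function.update_eq_self] using hc
termination_by R.card
decreasing_by all_goals exact Finset.card_erase_lt_of_mem hi

end Strategies

/-- Satisfier wins the 3-QBF game on `ψ = ∃x₁∀y₁⋯∃xₙ∀yₙ φ` if and only if Satisfier wins the
Paired SAT game on `(φ', X')`, where `X'` consists of the pairs `(z₀, y₀)`, `(xᵢ, tᵢ)` and
`(zᵢ, yᵢ)` and `φ' = φ ∧ ⋀ᵢ (y_{i-1} ⊕ t_i ⊕ z_i)`. -/
theorem qbf_iff_pairedSAT (n : ℕ) (φ : CNF3 (Fin n ⊕ Fin n)) :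
    QBFSatWins n φ ↔
      PSSatWins (pairedFormula n φ) Finset.univ (fun _ => false) (fun _ => false) := by
  constructor
  · intro h
    refine PSSatWins.of_move (Finset.mem_univ none) (b := false) fun c => ?_
    have hR : (Finset.univ : Finset (PairIdx n)).erase none = pairsFrom 0 := by
      ext a
      rcases a with _ | m | m <;> simp
    rw [hR]
    exact psSatWins_of_qbfSatWinsFrom φ 0 _ _ (fun j hj => absurd hj j.1.not_lt_zero)
      ((exists_strategy_iff_qbfSatWinsFrom _ _).1 h)
  · intro h
    by_contra hq
    exact not_psSatWins_of_not_qbfSatWinsFrom φ 0 _ _ _ (by simp) (by simp)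
      (fun hw => hq ((exists_strategy_iff_qbfSatWinsFrom _ _).2 hw)) h
end

section
/- Let H = (V, E) be a hypergraph and let e = {a, b} ∈ E be an edge of size exactly 2. If Waiter has a winning strategy in the Client-Waiter game on H, then Waiter has a winning strategy on H whose first move is to offer the pair {a, b}. -/
variable {α : Type*} [DecidableEq α]

/-- Client-Waiter game played on the edge set `E`: Waiter has a winning strategy from the
position in which `U` is the set of unclaimed vertices and `C` is the set of vertices already
claimed by Client.  While at least two vertices are unclaimed, Waiter offers two distinct
unclaimed vertices `x, y`; Client claims one of them and Waiter gets the other.  A last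
remaining unclaimed vertex goes to Client.  Waiter wins if at the end Client's vertices contain
no edge of `E`. -/
def CWWaiterWins (E : Set (Finset α)) (U C : Finset α) : Prop :=
  if _h : 2 ≤ U.card then
    ∃ x, ∃ _hx : x ∈ U, ∃ y, ∃ _hy : y ∈ U, x ≠ y ∧
      CWWaiterWins E (U \ {x, y}) (insert x C) ∧ CWWaiterWins E (U \ {x, y}) (insert y C)
  else ∀ e ∈ E, ¬ e ⊆ C ∪ U
termination_by U.card
decreasing_by all_goals exact card_sdiff_pair_lt (by assumption)

lemma cw_lemG (E : Set (Finset α)) (a b : α) (hab : ({a, b} : Finset α) ∈ E)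
    (U C : Finset α) (hw : CWWaiterWins E U C) (haC : a ∈ C) (hbCU : b ∈ C ∪ U) : False := by
  rw [CWWaiterWins] at hw
  split_ifs at hw with h2
  · obtain ⟨x, hx, y, hy, hxy, wx, wy⟩ := hw
    rcases Finset.mem_union.1 hbCU with hbC | hbU
    · exact cw_lemG E a b hab _ _ wx (Finset.mem_insert_of_mem haC)
        (Finset.mem_union_left _ (Finset.mem_insert_of_mem hbC))
    · by_cases hbx : b = x
      · subst hbx
        exact cw_lemG E a b hab _ _ wx (Finset.mem_insert_of_mem haC)
          (Finset.mem_union_left _ (Finset.mem_insert_self _ _))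
      · by_cases hby : b = y
        · subst hby
          exact cw_lemG E a b hab _ _ wy (Finset.mem_insert_of_mem haC)
            (Finset.mem_union_left _ (Finset.mem_insert_self _ _))
        · exact cw_lemG E a b hab _ _ wx (Finset.mem_insert_of_mem haC)
            (Finset.mem_union_right _ (by simp [Finset.mem_sdiff, hbU, hbx, hby]))
  · exact hw _ hab (by
      intro v hv
      rcases Finset.mem_insert.1 hv with rfl | hv
      · exact Finset.mem_union_left _ haC
      · rwa [Finset.mem_singleton.1 hv])
termination_by U.card
decreasing_by all_goals exact card_sdiff_pair_lt hx

lemma cw_lemK (E : Set (Finset α)) (a b : α) (hab : ({a, b} : Finset α) ∈ E) (hne : a ≠ b)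
    (U C : Finset α) (hw : CWWaiterWins E U C) (ha : a ∈ U) (hb : b ∈ U) :
    CWWaiterWins E (U \ {a, b}) (insert a C) := by
  have h2 : 2 ≤ U.card := Finset.one_lt_card.2 ⟨a, ha, b, hb, hne⟩
  rw [CWWaiterWins, dif_pos h2] at hw
  obtain ⟨x, hx, y, hy, hxy, wx, wy⟩ := hw
  have hab' : ({b, a} : Finset α) ∈ E := by rwa [Finset.pair_comm] at hab
  by_cases hxa : x = a
  · subst hxa
    by_cases hyb : y = b
    · subst hyb; exact wx
    · exact absurd (cw_lemG E x b hab _ _ wx (Finset.mem_insert_self _ _)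
        (Finset.mem_union_right _ (by
          simp only [Finset.mem_sdiff, Finset.mem_insert, Finset.mem_singleton]
          exact ⟨hb, by rintro (rfl | rfl) <;> simp_all⟩))) (fun h => h)
  by_cases hxb : x = b
  · subst hxb
    by_cases hya : y = a
    · subst hya
      rw [show ({x, y} : Finset α) = {y, x} from Finset.pair_comm x y] at wy
      exact wy
    · exact absurd (cw_lemG E x a hab' _ _ wx (Finset.mem_insert_self _ _)
        (Finset.mem_union_right _ (by
          simp only [Finset.mem_sdiff, Finset.mem_insert, Finset.mem_singleton]
          exact ⟨ha, by rintro (rfl | rfl) <;> simp_all⟩))) (fun h => h)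
  by_cases hya : y = a
  · subst hya
    exact absurd (cw_lemG E y b hab _ _ wy (Finset.mem_insert_self _ _)
      (Finset.mem_union_right _ (by
        simp only [Finset.mem_sdiff, Finset.mem_insert, Finset.mem_singleton]
        exact ⟨hb, by rintro (rfl | rfl) <;> simp_all⟩))) (fun h => h)
  by_cases hyb : y = b
  · subst hyb
    exact absurd (cw_lemG E y a hab' _ _ wy (Finset.mem_insert_self _ _)
      (Finset.mem_union_right _ (by
        simp only [Finset.mem_sdiff, Finset.mem_insert, Finset.mem_singleton]
        exact ⟨ha, by rintro (rfl | rfl) <;> simp_all⟩))) (fun h => h)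
  -- {x, y} disjoint from {a, b}
  have hx' : x ∈ U \ {a, b} := by
    simp only [Finset.mem_sdiff, Finset.mem_insert, Finset.mem_singleton]
    exact ⟨hx, by push_neg; exact ⟨hxa, hxb⟩⟩
  have hy' : y ∈ U \ {a, b} := by
    simp only [Finset.mem_sdiff, Finset.mem_insert, Finset.mem_singleton]
    exact ⟨hy, by push_neg; exact ⟨hya, hyb⟩⟩
  have h2' : 2 ≤ (U \ {a, b}).card := Finset.one_lt_card.2 ⟨x, hx', y, hy', hxy⟩
  rw [CWWaiterWins, dif_pos h2']
  have hsets : (U \ {a, b}) \ {x, y} = (U \ {x, y}) \ {a, b} := by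
    ext v; simp only [Finset.mem_sdiff]; tauto
  have ha' : a ∈ U \ {x, y} := by
    simp only [Finset.mem_sdiff, Finset.mem_insert, Finset.mem_singleton]
    exact ⟨ha, by push_neg; exact ⟨fun h => hxa h.symm, fun h => hya h.symm⟩⟩
  have hb' : b ∈ U \ {x, y} := by
    simp only [Finset.mem_sdiff, Finset.mem_insert, Finset.mem_singleton]
    exact ⟨hb, by push_neg; exact ⟨fun h => hxb h.symm, fun h => hyb h.symm⟩⟩
  refine ⟨x, hx', y, hy', hxy, ?_, ?_⟩
  · have := cw_lemK E a b hab hne (U \ {x, y}) (insert x C) wx ha' hb'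
    rwa [hsets, Finset.insert_comm]
  · have := cw_lemK E a b hab hne (U \ {x, y}) (insert y C) wy ha' hb'
    rwa [hsets, Finset.insert_comm]
termination_by U.card
decreasing_by all_goals exact card_sdiff_pair_lt hx

/-- If `{a, b}` is an edge of size two of `H = (V, E)` and Waiter has a winning strategy in the
Client-Waiter game on `H`, then Waiter has a winning strategy whose first move is to offer the
pair `{a, b}`: whichever of `a, b` Client claims, the resulting position is again a Waiter
win. -/
theorem cw_waiter_size_two_edge (V : Finset α) (E : Set (Finset α)) (hE : ∀ e ∈ E, e ⊆ V)
    (a b : α) (ha : a ∈ V) (hb : b ∈ V) (hab : a ≠ b) (he : ({a, b} : Finset α) ∈ E)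
    (hwin : CWWaiterWins E V ∅) :
    CWWaiterWins E (V \ {a, b}) {a} ∧ CWWaiterWins E (V \ {a, b}) {b} := by
  constructor
  · have := cw_lemK E a b he hab V ∅ hwin ha hb
    simpa using this
  · have he' : ({b, a} : Finset α) ∈ E := by rwa [Finset.pair_comm] at he
    have := cw_lemK E b a he' hab.symm V ∅ hwin hb ha
    rw [Finset.pair_comm b a] at this
    simpa using this
end

section
/- Let H = (V, E) be a hypergraph and let B ⊆ V be a block of H, i.e. |B| = 2k for some k ≥ 1 and every subset of B of size k+1 is an edge of E. If σ is a winning strategy for Waiter in the Client-Waiter game on H, then in every play consistent with σ, every pair offered by Waiter that contains a vertex of B is entirely contained in B, and (when |V| is odd) the vertex left for Client at the end does not belong to B. -/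
variable {α : Type*} [DecidableEq α]

/-- One round of a Client-Waiter game: the (ordered) pair offered by Waiter together with
Client's choice (`true` = Client takes the first component, `false` = the second one). -/
abbrev CWRound (α : Type*) := (α × α) × Bool

/-- The vertex claimed by Client in the round `r`. -/
def roundClient (r : CWRound α) : α := if r.2 then r.1.1 else r.1.2

/-- All the vertices claimed during the history `h`. -/
def histAll (h : List (CWRound α)) : Finset α :=
  h.foldr (fun r s => insert r.1.1 (insert r.1.2 s)) ∅

/-- The vertices claimed by Client during the history `h`. -/
def histClient (h : List (CWRound α)) : Finset α :=
  h.foldr (fun r s => insert (roundClient r) s) ∅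

/-- The histories of the Client-Waiter game on the vertex set `V` that are consistent with the
Waiter strategy `σ` (a function assigning to each history the next pair offered by Waiter):
at each round Waiter offers the two distinct unclaimed vertices given by `σ`, and Client
freely claims one of them. -/
inductive Consistent (V : Finset α) (σ : List (CWRound α) → α × α) :
    List (CWRound α) → Prop where
  | nil : Consistent V σ []
  | cons (h : List (CWRound α)) (b : Bool) (hcons : Consistent V σ h)
      (hx : (σ h).1 ∈ V \ histAll h) (hy : (σ h).2 ∈ V \ histAll h)
      (hne : (σ h).1 ≠ (σ h).2) :
      Consistent V σ (h ++ [(σ h, b)])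

/-- `σ` always offers two distinct unclaimed vertices whenever at least two vertices are
unclaimed. -/
def ValidStrategy (V : Finset α) (σ : List (CWRound α) → α × α) : Prop :=
  ∀ h, Consistent V σ h → 2 ≤ (V \ histAll h).card →
    (σ h).1 ∈ V \ histAll h ∧ (σ h).2 ∈ V \ histAll h ∧ (σ h).1 ≠ (σ h).2

/-- `σ` is a winning strategy for Waiter in the Client-Waiter game on `(V, E)`: it is a valid
strategy, and in every finished play consistent with `σ` (at most one vertex is unclaimed, and
such a last vertex goes to Client), Client's vertices contain no edge of `E`. -/
def WaiterWinningStrategy (V : Finset α) (E : Set (Finset α))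
    (σ : List (CWRound α) → α × α) : Prop :=
  ValidStrategy V σ ∧
    ∀ h, Consistent V σ h → (V \ histAll h).card ≤ 1 →
      ∀ e ∈ E, ¬ e ⊆ histClient h ∪ (V \ histAll h)

/-- `B` is a block of the hypergraph with edge set `E`: `B` has `2 * k` vertices for some
`k ≥ 1` and every subset of `B` of size `k + 1` is an edge. -/
def IsBlock (E : Set (Finset α)) (B : Finset α) : Prop :=
  ∃ k : ℕ, 1 ≤ k ∧ B.card = 2 * k ∧ ∀ s ⊆ B, s.card = k + 1 → s ∈ E

section Aux

set_option linter.unusedSectionVars false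

lemma histAll_nil : histAll ([] : List (CWRound α)) = ∅ := rfl

lemma histClient_nil : histClient ([] : List (CWRound α)) = ∅ := rfl

lemma histAll_cons (r : CWRound α) (h : List (CWRound α)) :
    histAll (r :: h) = insert r.1.1 (insert r.1.2 (histAll h)) := rfl

lemma histClient_cons (r : CWRound α) (h : List (CWRound α)) :
    histClient (r :: h) = insert (roundClient r) (histClient h) := rfl

lemma histAll_append (h₁ h₂ : List (CWRound α)) :
    histAll (h₁ ++ h₂) = histAll h₁ ∪ histAll h₂ := by
  induction h₁ with
  | nil => simp [histAll_nil]
  | cons a l ih => simp [histAll_cons, ih, Finset.insert_union]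

lemma histClient_append (h₁ h₂ : List (CWRound α)) :
    histClient (h₁ ++ h₂) = histClient h₁ ∪ histClient h₂ := by
  induction h₁ with
  | nil => simp [histClient_nil]
  | cons a l ih => simp [histClient_cons, ih, Finset.insert_union]

lemma histAll_single (r : CWRound α) : histAll [r] = {r.1.1, r.1.2} := by
  simp [histAll_cons, histAll_nil]

lemma histClient_single (r : CWRound α) : histClient [r] = {roundClient r} := by
  simp [histClient_cons, histClient_nil]

lemma histClient_subset_histAll (h : List (CWRound α)) :
    histClient h ⊆ histAll h := by
  induction h with
  | nil => simp [histClient_nil, histAll_nil]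
  | cons a l ih =>
    rw [histClient_cons, histAll_cons]
    intro x hx
    rcases Finset.mem_insert.1 hx with hx | hx
    · subst hx
      unfold roundClient
      split <;> simp
    · exact Finset.mem_insert_of_mem (Finset.mem_insert_of_mem (ih hx))

lemma card_union_inter {S T B : Finset α} (hd : Disjoint S T) :
    ((S ∪ T) ∩ B).card = (S ∩ B).card + (T ∩ B).card := by
  rw [Finset.union_inter_distrib_right, Finset.card_union_of_disjoint]
  exact hd.mono Finset.inter_subset_left Finset.inter_subset_left

lemma singleton_inter_card (B : Finset α) (c : α) :
    (({c} : Finset α) ∩ B).card = if c ∈ B then 1 else 0 := by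
  by_cases hc : c ∈ B
  · rw [Finset.singleton_inter_of_mem hc, if_pos hc, Finset.card_singleton]
  · rw [Finset.singleton_inter_of_notMem hc, if_neg hc, Finset.card_empty]

lemma pair_inter_card (B : Finset α) {x y : α} (hxy : x ≠ y) :
    (({x, y} : Finset α) ∩ B).card =
      (if x ∈ B then 1 else 0) + (if y ∈ B then 1 else 0) := by
  have hins : ({x, y} : Finset α) = insert x {y} := rfl
  by_cases hx : x ∈ B <;> by_cases hy : y ∈ B
  · rw [hins, Finset.insert_inter_of_mem hx, Finset.singleton_inter_of_mem hy,
      Finset.card_insert_of_notMem (by simpa using hxy)]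
    simp [hx, hy]
  · rw [hins, Finset.insert_inter_of_mem hx, Finset.singleton_inter_of_notMem hy]
    simp [hx, hy]
  · rw [hins, Finset.insert_inter_of_notMem hx, Finset.singleton_inter_of_mem hy]
    simp [hx, hy]
  · rw [hins, Finset.insert_inter_of_notMem hx, Finset.singleton_inter_of_notMem hy]
    simp [hx, hy]

lemma histAll_concat_inter_card (B : Finset α) {h : List (CWRound α)} {r : CWRound α}
    (hx : r.1.1 ∉ histAll h) (hy : r.1.2 ∉ histAll h) (hxy : r.1.1 ≠ r.1.2) :
    (histAll (h ++ [r]) ∩ B).card =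
      (histAll h ∩ B).card +
        ((if r.1.1 ∈ B then 1 else 0) + (if r.1.2 ∈ B then 1 else 0)) := by
  rw [histAll_append, histAll_single, card_union_inter, pair_inter_card B hxy]
  rw [Finset.disjoint_right]
  intro a ha
  simp only [Finset.mem_insert, Finset.mem_singleton] at ha
  rcases ha with rfl | rfl
  · exact hx
  · exact hy

lemma histClient_concat_inter_card (B : Finset α) {h : List (CWRound α)} {r : CWRound α}
    (hx : r.1.1 ∉ histAll h) (hy : r.1.2 ∉ histAll h) :
    (histClient (h ++ [r]) ∩ B).card =
      (histClient h ∩ B).card + (if roundClient r ∈ B then 1 else 0) := by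
  rw [histClient_append, histClient_single, card_union_inter, singleton_inter_card]
  rw [Finset.disjoint_right]
  intro a ha
  simp only [Finset.mem_singleton] at ha
  subst ha
  intro hmem
  have hmem' := histClient_subset_histAll h hmem
  unfold roundClient at hmem'
  rcases Bool.eq_false_or_eq_true r.2 with hb | hb <;> rw [hb] at hmem' <;> simp at hmem'
  · exact hx hmem'
  · exact hy hmem'

/-- Every round of a consistent history is given by `σ` applied to the corresponding prefix,
which is itself consistent, and the offered vertices are fresh and distinct. -/
lemma consistent_round {V : Finset α} {σ : List (CWRound α) → α × α} :
    ∀ {L : List (CWRound α)}, Consistent V σ L →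
    ∀ (h₀ : List (CWRound α)) (r : CWRound α) (t : List (CWRound α)), L = h₀ ++ r :: t →
      Consistent V σ h₀ ∧ r.1 = σ h₀ ∧ (σ h₀).1 ∈ V \ histAll h₀ ∧
        (σ h₀).2 ∈ V \ histAll h₀ ∧ (σ h₀).1 ≠ (σ h₀).2 := by
  intro L hc
  induction hc with
  | nil =>
    intro h₀ r t ht
    exact absurd ht (by simp)
  | cons h b hcons hx hy hne ih =>
    intro h₀ r t ht
    rcases List.eq_nil_or_concat t with rfl | ⟨t', a, rfl⟩
    · obtain ⟨heq, h2⟩ := List.append_inj' ht rfl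
      injection h2 with h3 _
      subst heq
      exact ⟨hcons, by rw [← h3], hx, hy, hne⟩
    · have ht' : h ++ [(σ h, b)] = (h₀ ++ r :: t') ++ [a] := by rw [ht]; simp
      obtain ⟨heq, _⟩ := List.append_inj' ht' rfl
      exact ih h₀ r t' heq

lemma exists_first_not {P : CWRound α → Prop} :
    ∀ (l : List (CWRound α)), (∃ r ∈ l, ¬ P r) →
      ∃ l₀ r t, l = l₀ ++ r :: t ∧ ¬ P r ∧ ∀ x ∈ l₀, P x := by
  intro l
  induction l with
  | nil => simp
  | cons a l ih =>
    intro hex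
    by_cases ha : P a
    · obtain ⟨r, hr, hPr⟩ := hex
      rcases List.mem_cons.1 hr with rfl | hr
      · exact absurd ha hPr
      · obtain ⟨l₀, r', t, rfl, h1, h2⟩ := ih ⟨r, hr, hPr⟩
        refine ⟨a :: l₀, r', t, rfl, h1, ?_⟩
        intro x hx
        rcases List.mem_cons.1 hx with rfl | hx
        · exact ha
        · exact h2 x hx
    · exact ⟨[], a, l, rfl, ha, by simp⟩

/-- If all rounds of a consistent history are "full or disjoint" with respect to `B`, then
Client has claimed at least half of the claimed vertices of `B` (regardless of his choices). -/
lemma no_partial_invariant {V : Finset α} {σ : List (CWRound α) → α × α} {B : Finset α} :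
    ∀ {L : List (CWRound α)}, Consistent V σ L →
    (∀ r ∈ L, ((r : CWRound α).1.1 ∈ B ↔ r.1.2 ∈ B)) →
    (histAll L ∩ B).card ≤ 2 * (histClient L ∩ B).card := by
  intro L hc
  induction hc with
  | nil => simp [histAll_nil, histClient_nil]
  | cons h b hcons hx hy hne ih =>
    intro hP
    have ih' := ih (fun r hr => hP r (by simp [hr]))
    have hxA : (σ h).1 ∉ histAll h := (Finset.mem_sdiff.1 hx).2
    have hyA : (σ h).2 ∉ histAll h := (Finset.mem_sdiff.1 hy).2
    have hA := histAll_concat_inter_card B (r := (σ h, b)) hxA hyA hne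
    have hC := histClient_concat_inter_card B (r := (σ h, b)) hxA hyA
    have hiff : (σ h).1 ∈ B ↔ (σ h).2 ∈ B := hP (σ h, b) (by simp)
    cases b <;> by_cases hxB : (σ h).1 ∈ B <;> by_cases hyB : (σ h).2 ∈ B <;>
      simp only [roundClient] at hC <;>
      simp [hxB, hyB] at hA hC hiff <;> omega

/-- Greedy extension: any consistent history satisfying the counting invariant can be extended
to a finished consistent history still satisfying the invariant. -/
lemma greedy_extend {V : Finset α} {σ : List (CWRound α) → α × α}
    (hval : ValidStrategy V σ) (B : Finset α) (m : ℕ) :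
    ∀ (n : ℕ) (h : List (CWRound α)), Consistent V σ h → (V \ histAll h).card ≤ n →
      (histAll h ∩ B).card + m ≤ 2 * (histClient h ∩ B).card →
      ∃ g, Consistent V σ g ∧ (V \ histAll g).card ≤ 1 ∧
        (histAll g ∩ B).card + m ≤ 2 * (histClient g ∩ B).card := by
  intro n
  induction n with
  | zero =>
    intro h hc h0 hinv
    exact ⟨h, hc, by omega, hinv⟩
  | succ n ih =>
    intro h hc hn hinv
    by_cases hfin : (V \ histAll h).card ≤ 1
    · exact ⟨h, hc, hfin, hinv⟩
    · obtain ⟨hx, hy, hne⟩ := hval h hc (by omega)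
      have hxA : (σ h).1 ∉ histAll h := (Finset.mem_sdiff.1 hx).2
      have hyA : (σ h).2 ∉ histAll h := (Finset.mem_sdiff.1 hy).2
      set b : Bool := decide ((σ h).2 ∉ B) with hb
      have hc' : Consistent V σ (h ++ [(σ h, b)]) := Consistent.cons h b hc hx hy hne
      have hdec : (V \ histAll (h ++ [(σ h, b)])).card < (V \ histAll h).card := by
        have hset : V \ histAll (h ++ [(σ h, b)]) =
            (V \ histAll h) \ {(σ h).1, (σ h).2} := by
          ext a
          simp only [histAll_append, histAll_single, Finset.mem_sdiff, Finset.mem_union,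
            Finset.mem_insert, Finset.mem_singleton]
          tauto
        rw [hset]
        exact card_sdiff_pair_lt hx
      have hA := histAll_concat_inter_card B (r := (σ h, b)) hxA hyA hne
      have hC := histClient_concat_inter_card B (r := (σ h, b)) hxA hyA
      have hrc2 : roundClient (σ h, b) =
          if (σ h).2 ∈ B then (σ h).2 else (σ h).1 := by
        simp only [roundClient, hb]
        by_cases hyB : (σ h).2 ∈ B <;> simp [hyB]
      rw [hrc2] at hC
      refine ih (h ++ [(σ h, b)]) hc' (by omega) ?_
      by_cases hxB : (σ h).1 ∈ B <;> by_cases hyB : (σ h).2 ∈ B <;>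
        simp [hxB, hyB] at hA hC <;> omega

/-- Counting at the end of the game: the invariant forces `m = 0` and no vertex of `B` is
left unclaimed. -/
lemma final_count {V : Finset α} {E : Set (Finset α)} {σ : List (CWRound α) → α × α}
    (hσ : WaiterWinningStrategy V E σ)
    {B : Finset α} (hBV : B ⊆ V) {k : ℕ} (hk : 1 ≤ k) (hcard : B.card = 2 * k)
    (hedge : ∀ s ⊆ B, s.card = k + 1 → s ∈ E)
    {g : List (CWRound α)} (hg : Consistent V σ g) (hfin : (V \ histAll g).card ≤ 1)
    {m : ℕ} (hinv : (histAll g ∩ B).card + m ≤ 2 * (histClient g ∩ B).card) :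
    m = 0 ∧ B \ histAll g = ∅ := by
  set c := (histClient g ∩ B).card with hc
  set a := (histAll g ∩ B).card with ha
  set l := (B \ histAll g).card with hl
  have hl1 : l ≤ 1 := le_trans
    (Finset.card_le_card (Finset.sdiff_subset_sdiff hBV (le_refl _))) hfin
  have hal : a + l = 2 * k := by
    have h1 := Finset.card_inter_add_card_sdiff B (histAll g)
    rw [hcard] at h1
    rw [ha, hl, Finset.inter_comm]
    exact h1
  have hdisj : Disjoint (histClient g ∩ B) (B \ histAll g) := by
    rw [Finset.disjoint_right]
    intro x hxd hxc
    exact (Finset.mem_sdiff.1 hxd).2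
      (histClient_subset_histAll g (Finset.mem_inter.1 hxc).1)
  have hT : ((histClient g ∩ B) ∪ (B \ histAll g)).card = c + l :=
    Finset.card_union_of_disjoint hdisj
  have hkey : c + l ≤ k := by
    by_contra hcon
    push_neg at hcon
    obtain ⟨S, hS, hScard⟩ := Finset.exists_subset_card_eq
      (show k + 1 ≤ ((histClient g ∩ B) ∪ (B \ histAll g)).card by omega)
    have hSB : S ⊆ B := hS.trans (by
      intro x hx
      rcases Finset.mem_union.1 hx with hx | hx
      · exact (Finset.mem_inter.1 hx).2
      · exact (Finset.mem_sdiff.1 hx).1)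
    have hSE : S ∈ E := hedge S hSB hScard
    refine hσ.2 g hg hfin S hSE (hS.trans ?_)
    intro x hx
    rcases Finset.mem_union.1 hx with hx | hx
    · exact Finset.mem_union_left _ (Finset.mem_inter.1 hx).1
    · refine Finset.mem_union_right _ ?_
      rw [Finset.mem_sdiff] at hx ⊢
      exact ⟨hBV hx.1, hx.2⟩
  have hml : m = 0 ∧ l = 0 := by omega
  refine ⟨hml.1, Finset.card_eq_zero.1 ?_⟩
  rw [← hl]; exact hml.2

/-- The key claim: in every play consistent with a winning Waiter strategy, every offered pair
is either fully inside or fully outside the block `B`. -/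
lemma all_rounds_iff {V : Finset α} {E : Set (Finset α)} {σ : List (CWRound α) → α × α}
    (hσ : WaiterWinningStrategy V E σ)
    {B : Finset α} (hBV : B ⊆ V) {k : ℕ} (hk : 1 ≤ k) (hcard : B.card = 2 * k)
    (hedge : ∀ s ⊆ B, s.card = k + 1 → s ∈ E) :
    ∀ h, Consistent V σ h → ∀ r ∈ h, ((r : CWRound α).1.1 ∈ B ↔ r.1.2 ∈ B) := by
  intro h hc
  by_contra hcon
  have hex : ∃ r ∈ h, ¬ ((r : CWRound α).1.1 ∈ B ↔ r.1.2 ∈ B) := by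
    push_neg at hcon
    obtain ⟨r, hr, h1⟩ := hcon
    exact ⟨r, hr, by tauto⟩
  obtain ⟨h₀, r', t, rfl, hPr', hPrefix⟩ :=
    exists_first_not (P := fun r => (r.1.1 ∈ B ↔ r.1.2 ∈ B)) h hex
  obtain ⟨hc₀, hr1, hx, hy, hne⟩ := consistent_round hc h₀ r' t rfl
  have hbase := no_partial_invariant hc₀ hPrefix
  have hxA : (σ h₀).1 ∉ histAll h₀ := (Finset.mem_sdiff.1 hx).2
  have hyA : (σ h₀).2 ∉ histAll h₀ := (Finset.mem_sdiff.1 hy).2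
  set b : Bool := decide ((σ h₀).2 ∉ B) with hb
  have hc₁ : Consistent V σ (h₀ ++ [(σ h₀, b)]) := Consistent.cons h₀ b hc₀ hx hy hne
  have hA := histAll_concat_inter_card B (r := (σ h₀, b)) hxA hyA hne
  have hC := histClient_concat_inter_card B (r := (σ h₀, b)) hxA hyA
  have hrc2 : roundClient (σ h₀, b) =
      if (σ h₀).2 ∈ B then (σ h₀).2 else (σ h₀).1 := by
    simp only [roundClient, hb]
    by_cases hyB : (σ h₀).2 ∈ B <;> simp [hyB]
  rw [hrc2] at hC
  have hP' : ¬ ((σ h₀).1 ∈ B ↔ (σ h₀).2 ∈ B) := by rw [← hr1]; exact hPr'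
  have hinv₁ : (histAll (h₀ ++ [(σ h₀, b)]) ∩ B).card + 1 ≤
      2 * (histClient (h₀ ++ [(σ h₀, b)]) ∩ B).card := by
    by_cases hxB : (σ h₀).1 ∈ B <;> by_cases hyB : (σ h₀).2 ∈ B <;>
      simp [hxB, hyB] at hA hC hP' <;> omega
  obtain ⟨g, hg, hgfin, hginv⟩ := greedy_extend hσ.1 B 1 V.card (h₀ ++ [(σ h₀, b)]) hc₁
    (Finset.card_le_card (Finset.sdiff_subset)) hinv₁
  have hfinal := (final_count hσ hBV hk hcard hedge hg hgfin hginv).1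
  omega


end Aux

/-- If `B` is a block of `H = (V, E)` and `σ` is a winning strategy for Waiter in the
Client-Waiter game on `H`, then in every play consistent with `σ`, every pair offered by
Waiter that contains a vertex of `B` is entirely contained in `B`, and (when `|V|` is odd)
the vertex left for Client at the end does not belong to `B`. -/
theorem cw_waiter_block_pairs (V : Finset α) (E : Set (Finset α)) (hE : ∀ e ∈ E, e ⊆ V)
    (B : Finset α) (hBV : B ⊆ V) (hB : IsBlock E B)
    (σ : List (CWRound α) → α × α) (hσ : WaiterWinningStrategy V E σ) :
    (∀ h, Consistent V σ h → ∀ r ∈ h, (r.1.1 ∈ B ∨ r.1.2 ∈ B) → (r.1.1 ∈ B ∧ r.1.2 ∈ B)) ∧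
    (Odd V.card → ∀ h, Consistent V σ h → (V \ histAll h).card ≤ 1 →
      ∀ z ∈ V \ histAll h, z ∉ B) := by
  obtain ⟨k, hk, hcard, hedge⟩ := hB
  have hiff := all_rounds_iff hσ hBV hk hcard hedge
  constructor
  · intro h hc r hr hor
    have := hiff h hc r hr
    tauto
  · intro _ h hc hfin z hz hzB
    have hinv := no_partial_invariant hc (hiff h hc)
    have hempty := (final_count hσ hBV hk hcard hedge hc hfin
      (m := 0) (by omega)).2
    have hzmem : z ∈ B \ histAll h :=
      Finset.mem_sdiff.2 ⟨hzB, (Finset.mem_sdiff.1 hz).2⟩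
    rw [hempty] at hzmem
    exact absurd hzmem (Finset.notMem_empty z)
end

section
/- Let H = (V, E) be a blocks-hypergraph, i.e. V can be partitioned into blocks of H. If σ is a winning strategy for Waiter in the Client-Waiter game on H, then in every play consistent with σ, every pair of vertices offered by Waiter is contained in a single block of the partition. -/
variable {α : Type*} [DecidableEq α]

lemma histAll_snoc (h : List (CWRound α)) (r : CWRound α) :
    histAll (h ++ [r]) = histAll h ∪ {r.1.1, r.1.2} := by
  induction h with
  | nil =>
      ext a; simp [histAll]
  | cons a t ih =>
      show insert a.1.1 (insert a.1.2 (histAll (t ++ [r]))) = _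
      rw [ih]
      ext x
      show _ ↔ x ∈ insert a.1.1 (insert a.1.2 (histAll t)) ∪ _
      simp only [Finset.mem_insert, Finset.mem_union, Finset.mem_singleton]
      tauto

lemma histClient_snoc (h : List (CWRound α)) (r : CWRound α) :
    histClient (h ++ [r]) = insert (roundClient r) (histClient h) := by
  induction h with
  | nil => rfl
  | cons a t ih =>
      show insert (roundClient a) (histClient (t ++ [r])) = _
      rw [ih]
      show _ = insert (roundClient r) (insert (roundClient a) (histClient t))
      rw [Finset.insert_comm]

lemma Consistent.prefix {V : Finset α} {σ : List (CWRound α) → α × α}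
    {l : List (CWRound α)} (hl : Consistent V σ l) :
    ∀ h t, l = h ++ t → Consistent V σ h := by
  induction hl with
  | nil =>
      intro h t heq
      obtain ⟨rfl, rfl⟩ := List.append_eq_nil_iff.1 heq.symm
      exact .nil
  | cons g b hc hx hy hne ih =>
      intro h t heq
      rcases List.eq_nil_or_concat t with rfl | ⟨t', r, rfl⟩
      · rw [List.append_nil] at heq
        rw [← heq]
        exact .cons g b hc hx hy hne
      · rw [List.concat_eq_append, ← List.append_assoc] at heq
        obtain ⟨heq1, -⟩ := List.append_inj' heq rfl
        exact ih h t' heq1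

lemma Consistent.snoc_inv {V : Finset α} {σ : List (CWRound α) → α × α}
    {h : List (CWRound α)} {r : CWRound α} (hl : Consistent V σ (h ++ [r])) :
    r.1 = σ h ∧ Consistent V σ h ∧ (σ h).1 ∈ V \ histAll h ∧
      (σ h).2 ∈ V \ histAll h ∧ (σ h).1 ≠ (σ h).2 := by
  generalize heq : h ++ [r] = l at hl
  induction hl with
  | nil => simp at heq
  | cons g b hc hx hy hne ih =>
      obtain ⟨rfl, heq2⟩ := List.append_inj' heq.symm rfl
      have : r = (σ g, b) := by simpa using heq2.symm
      subst this
      exact ⟨rfl, hc, hx, hy, hne⟩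

lemma goodcounts {V : Finset α} {σ : List (CWRound α) → α × α} {P : Finset (Finset α)}
    (hdisj : ∀ p ∈ P, ∀ q ∈ P, p ≠ q → Disjoint p q)
    {h : List (CWRound α)} (hc : Consistent V σ h)
    (hgood : ∀ r ∈ h, ∃ q ∈ P, r.1.1 ∈ q ∧ r.1.2 ∈ q)
    {p : Finset α} (hp : p ∈ P) (hpV : p ⊆ V) :
    2 * (histClient h ∩ p).card + ((V \ histAll h) ∩ p).card = p.card := by
  induction hc with
  | nil =>
      have : histClient ([] : List (CWRound α)) = ∅ := rfl
      have h2 : histAll ([] : List (CWRound α)) = ∅ := rfl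
      rw [this, h2]
      simp [Finset.inter_eq_right.2 hpV]
  | cons g b hcg hx hy hne ih =>
      have hgoodg : ∀ r ∈ g, ∃ q ∈ P, r.1.1 ∈ q ∧ r.1.2 ∈ q := by
        intro r hr; exact hgood r (List.mem_append_left _ hr)
      have IH := ih hgoodg
      obtain ⟨q, hq, hxq, hyq⟩ := hgood (σ g, b) (by simp)
      simp only at hxq hyq
      set x := (σ g).1 with hxdef
      set y := (σ g).2 with hydef
      have hz : roundClient ((σ g, b) : CWRound α) ∈ V \ histAll g := by
        unfold roundClient; dsimp only; cases b
        · simpa using hy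
        · simpa using hx
      have hznotc : roundClient ((σ g, b) : CWRound α) ∉ histClient g := fun hmem =>
        (Finset.mem_sdiff.1 hz).2 (histClient_subset_histAll g hmem)
      rw [histClient_snoc, histAll_snoc]
      have hAll : V \ (histAll g ∪ {x, y}) = (V \ histAll g) \ {x, y} := by
        ext a; simp [Finset.mem_sdiff]; tauto
      rw [hAll]
      by_cases hqp : q = p
      · subst hqp
        have hzq : roundClient ((σ g, b) : CWRound α) ∈ q := by
          unfold roundClient; dsimp only; cases b
          · simpa using hyq
          · simpa using hxq
        have hcl : insert (roundClient ((σ g, b) : CWRound α)) (histClient g) ∩ q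
            = insert (roundClient ((σ g, b) : CWRound α)) (histClient g ∩ q) :=
          Finset.insert_inter_of_mem hzq
        have hclcard : (insert (roundClient ((σ g, b) : CWRound α)) (histClient g) ∩ q).card
            = (histClient g ∩ q).card + 1 := by
          rw [hcl, Finset.card_insert_of_notMem (fun hmem => hznotc (Finset.mem_inter.1 hmem).1)]
        have huncl : ((V \ histAll g) \ {x, y}) ∩ q = ((V \ histAll g) ∩ q) \ {x, y} := by
          ext a; simp [Finset.mem_sdiff]; tauto
        have hsub : ({x, y} : Finset α) ⊆ (V \ histAll g) ∩ q := by
          intro a ha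
          rcases Finset.mem_insert.1 ha with rfl | ha
          · exact Finset.mem_inter.2 ⟨hx, hxq⟩
          · rw [Finset.mem_singleton.1 ha]; exact Finset.mem_inter.2 ⟨hy, hyq⟩
        have hcard2 : ({x, y} : Finset α).card = 2 := by
          rw [Finset.card_insert_of_notMem (by simpa using hne), Finset.card_singleton]
        have hge2 : 2 ≤ ((V \ histAll g) ∩ q).card := by
          calc 2 = ({x, y} : Finset α).card := hcard2.symm
          _ ≤ _ := Finset.card_le_card hsub
        rw [huncl, Finset.card_sdiff_of_subset hsub, hcard2, hclcard]
        omega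
      · have hd := hdisj q hq p hp hqp
        have hxp : x ∉ p := fun hxp => (Finset.disjoint_left.1 hd hxq) hxp
        have hyp : y ∉ p := fun hyp => (Finset.disjoint_left.1 hd hyq) hyp
        have hzp : roundClient ((σ g, b) : CWRound α) ∉ p := by
          unfold roundClient; dsimp only; cases b
          · simpa using hyp
          · simpa using hxp
        have hcl : insert (roundClient ((σ g, b) : CWRound α)) (histClient g) ∩ p
            = histClient g ∩ p :=
          Finset.insert_inter_of_notMem hzp
        have huncl : ((V \ histAll g) \ {x, y}) ∩ p = (V \ histAll g) ∩ p := by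
          ext a
          simp only [Finset.mem_inter, Finset.mem_sdiff, Finset.mem_insert, Finset.mem_singleton]
          constructor
          · tauto
          · rintro ⟨ha, hap⟩
            refine ⟨⟨ha, ?_⟩, hap⟩
            rintro (rfl | rfl) <;> [exact hxp hap; exact hyp hap]
        rw [hcl, huncl]; exact IH

lemma descent {V : Finset α} {E : Set (Finset α)} {σ : List (CWRound α) → α × α}
    (hσ : WaiterWinningStrategy V E σ) (p : Finset α) (k : ℕ) :
    ∀ n, ∀ h, Consistent V σ h → (V \ histAll h).card ≤ n →
    k + 1 ≤ (histClient h ∩ p).card + (((V \ histAll h) ∩ p).card + 1) / 2 →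
    ∃ h', Consistent V σ h' ∧ (V \ histAll h').card ≤ 1 ∧
      k + 1 ≤ (histClient h' ∩ p).card + (((V \ histAll h') ∩ p).card + 1) / 2 := by
  intro n
  induction n with
  | zero => exact fun h hc hcard hinv => ⟨h, hc, le_trans hcard (by norm_num), hinv⟩
  | succ n ih =>
    intro h hc hcard hinv
    by_cases hfin : (V \ histAll h).card ≤ 1
    · exact ⟨h, hc, hfin, hinv⟩
    · push_neg at hfin
      obtain ⟨hx, hy, hne⟩ := hσ.1 h hc hfin
      set x := (σ h).1 with hxd
      set y := (σ h).2 with hyd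
      set b := decide (x ∈ p) with hb
      have hcons' : Consistent V σ (h ++ [(σ h, b)]) := .cons h b hc hx hy hne
      have hAll : V \ histAll (h ++ [(σ h, b)]) = (V \ histAll h) \ {x, y} := by
        rw [histAll_snoc]; ext a; simp only [Finset.mem_sdiff, Finset.mem_union,
          Finset.mem_insert, Finset.mem_singleton]; tauto
      have hcardlt : (V \ histAll (h ++ [(σ h, b)])).card < (V \ histAll h).card := by
        rw [hAll]; exact card_sdiff_pair_lt hx
      apply ih (h ++ [(σ h, b)]) hcons' (by omega)
      -- invariant preservation
      set c := (histClient h ∩ p).card with hcdef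
      set u := ((V \ histAll h) ∩ p).card with hudef
      have hUeq : (V \ histAll (h ++ [(σ h, b)])) ∩ p = ((V \ histAll h) ∩ p) \ {x, y} := by
        rw [hAll]; ext a; simp only [Finset.mem_inter, Finset.mem_sdiff]; tauto
      have hUge : u ≤ ((V \ histAll (h ++ [(σ h, b)])) ∩ p).card + 2 := by
        rw [hUeq]
        have h1 := Finset.le_card_sdiff ({x, y} : Finset α) ((V \ histAll h) ∩ p)
        have h2 : ({x, y} : Finset α).card ≤ 2 :=
          le_trans (Finset.card_insert_le _ _) (by simp)
        omega
      rw [histClient_snoc]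
      have hznotc : roundClient ((σ h, b) : CWRound α) ∉ histClient h := by
        have hz : roundClient ((σ h, b) : CWRound α) ∈ V \ histAll h := by
          unfold roundClient; dsimp only; cases hbval : b
          · simpa using hy
          · simpa using hx
        exact fun hmem => (Finset.mem_sdiff.1 hz).2 (histClient_subset_histAll h hmem)
      by_cases hxp : x ∈ p
      · have hbt : b = true := by rw [hb, decide_eq_true_eq]; exact hxp
        have hzx : roundClient ((σ h, b) : CWRound α) = x := by
          unfold roundClient; rw [hbt]; rfl
        have hC : insert (roundClient ((σ h, b) : CWRound α)) (histClient h) ∩ p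
            = insert x (histClient h ∩ p) := by
          rw [hzx, Finset.insert_inter_of_mem hxp]
        have hCcard : (insert (roundClient ((σ h, b) : CWRound α)) (histClient h) ∩ p).card
            = c + 1 := by
          rw [hC, Finset.card_insert_of_notMem
            (fun hmem => hznotc (by rw [hzx]; exact (Finset.mem_inter.1 hmem).1))]
        rw [hCcard]
        omega
      · by_cases hyp : y ∈ p
        · have hbf : b = false := by rw [hb, decide_eq_false_iff_not]; exact hxp
          have hzy : roundClient ((σ h, b) : CWRound α) = y := by
            unfold roundClient; rw [hbf]; rfl
          have hC : insert (roundClient ((σ h, b) : CWRound α)) (histClient h) ∩ p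
              = insert y (histClient h ∩ p) := by
            rw [hzy, Finset.insert_inter_of_mem hyp]
          have hCcard : (insert (roundClient ((σ h, b) : CWRound α)) (histClient h) ∩ p).card
              = c + 1 := by
            rw [hC, Finset.card_insert_of_notMem
              (fun hmem => hznotc (by rw [hzy]; exact (Finset.mem_inter.1 hmem).1))]
          rw [hCcard]
          omega
        · have hUeq2 : (V \ histAll (h ++ [(σ h, b)])) ∩ p = (V \ histAll h) ∩ p := by
            rw [hUeq]; ext a
            simp only [Finset.mem_sdiff, Finset.mem_inter, Finset.mem_insert,
              Finset.mem_singleton]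
            constructor
            · tauto
            · rintro ⟨ha, hap⟩
              exact ⟨⟨ha, hap⟩, by rintro (rfl | rfl) <;> [exact hxp hap; exact hyp hap]⟩
          have hCge : c ≤ (insert (roundClient ((σ h, b) : CWRound α)) (histClient h) ∩ p).card := by
            apply Finset.card_le_card
            intro a ha
            simp only [Finset.mem_inter, Finset.mem_insert] at ha ⊢
            tauto
          rw [hUeq2]
          omega

lemma finish {V : Finset α} {E : Set (Finset α)} {σ : List (CWRound α) → α × α}
    (hσ : WaiterWinningStrategy V E σ) {p : Finset α} {k : ℕ}
    (hedge : ∀ s ⊆ p, s.card = k + 1 → s ∈ E)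
    {h : List (CWRound α)} (hc : Consistent V σ h) (hfin : (V \ histAll h).card ≤ 1)
    (hinv : k + 1 ≤ (histClient h ∩ p).card + (((V \ histAll h) ∩ p).card + 1) / 2) : False := by
  set S := (histClient h ∪ (V \ histAll h)) ∩ p with hSdef
  have hu1 : ((V \ histAll h) ∩ p).card ≤ 1 :=
    le_trans (Finset.card_le_card Finset.inter_subset_left) hfin
  have hdisj : Disjoint (histClient h ∩ p) ((V \ histAll h) ∩ p) := by
    rw [Finset.disjoint_left]
    intro a ha hb
    exact (Finset.mem_sdiff.1 (Finset.mem_inter.1 hb).1).2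
      (histClient_subset_histAll h (Finset.mem_inter.1 ha).1)
  have hcard : (histClient h ∩ p).card + ((V \ histAll h) ∩ p).card ≤ S.card := by
    rw [← Finset.card_union_of_disjoint hdisj]
    apply Finset.card_le_card
    intro a ha
    simp only [Finset.mem_union, Finset.mem_inter, hSdef] at ha ⊢
    tauto
  have hS : k + 1 ≤ S.card := by omega
  obtain ⟨s, hsS, hscard⟩ := Finset.exists_subset_card_eq hS
  exact hσ.2 h hc hfin s (hedge s (hsS.trans Finset.inter_subset_right) hscard)
    (hsS.trans Finset.inter_subset_left)

/-- If `H = (V, E)` is a blocks-hypergraph, with `V` partitioned into the blocks of `P`, and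
`σ` is a winning strategy for Waiter in the Client-Waiter game on `H`, then in every play
consistent with `σ`, every pair offered by Waiter is contained in a single block of the
partition. -/
theorem cw_waiter_blocks_partition (V : Finset α) (E : Set (Finset α)) (hE : ∀ e ∈ E, e ⊆ V)
    (P : Finset (Finset α)) (hPV : ∀ p ∈ P, p ⊆ V) (hcov : ∀ v ∈ V, ∃ p ∈ P, v ∈ p)
    (hdisj : ∀ p ∈ P, ∀ q ∈ P, p ≠ q → Disjoint p q) (hblocks : ∀ p ∈ P, IsBlock E p)
    (σ : List (CWRound α) → α × α) (hσ : WaiterWinningStrategy V E σ) :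
    ∀ h, Consistent V σ h → ∀ r ∈ h, ∃ p ∈ P, r.1.1 ∈ p ∧ r.1.2 ∈ p := by
  suffices H : ∀ n, ∀ h : List (CWRound α), h.length ≤ n → Consistent V σ h →
      ∀ r ∈ h, ∃ p ∈ P, r.1.1 ∈ p ∧ r.1.2 ∈ p by
    intro h hc r hr; exact H h.length h le_rfl hc r hr
  intro n
  induction n with
  | zero =>
      intro h hlen hc r hr
      rw [List.length_eq_zero_iff.1 (Nat.le_zero.1 hlen)] at hr
      simp at hr
  | succ n ih =>
      intro h hlen hc r hr
      obtain ⟨h1, h2, rfl⟩ := List.append_of_mem hr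
      have hc1r : Consistent V σ (h1 ++ [r]) :=
        hc.prefix (h1 ++ [r]) h2 (by simp)
      obtain ⟨hr1, hc1, hx, hy, hne⟩ := hc1r.snoc_inv
      by_contra hbad
      push_neg at hbad
      have hlen1 : h1.length ≤ n := by
        rw [List.length_append] at hlen; simp at hlen; omega
      have hgood1 : ∀ r' ∈ h1, ∃ p ∈ P, r'.1.1 ∈ p ∧ r'.1.2 ∈ p :=
        fun r' hr' => ih h1 hlen1 hc1 r' hr'
      have hxV : (σ h1).1 ∈ V := (Finset.mem_sdiff.1 hx).1
      obtain ⟨p, hp, hxp⟩ := hcov _ hxV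
      have hyp : (σ h1).2 ∉ p := by
        have hb := hbad p hp
        rw [hr1] at hb
        exact hb hxp
      obtain ⟨k, hk1, hkcard, hedge⟩ := hblocks p hp
      have hcount := goodcounts hdisj hc1 hgood1 hp (hPV p hp)
      rw [hkcard] at hcount
      set x := (σ h1).1 with hxd
      set y := (σ h1).2 with hyd
      -- play the round, Client taking x
      have hcons0 : Consistent V σ (h1 ++ [(σ h1, true)]) := .cons h1 true hc1 hx hy hne
      set h0 := h1 ++ [(σ h1, true)] with h0def
      have hzx : roundClient ((σ h1, true) : CWRound α) = x := rfl
      have hznotc : x ∉ histClient h1 := fun hmem =>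
        (Finset.mem_sdiff.1 hx).2 (histClient_subset_histAll h1 hmem)
      have hCcard : (histClient h0 ∩ p).card = (histClient h1 ∩ p).card + 1 := by
        rw [h0def, histClient_snoc, hzx, Finset.insert_inter_of_mem hxp,
          Finset.card_insert_of_notMem (fun hmem => hznotc (Finset.mem_inter.1 hmem).1)]
      have hUeq : (V \ histAll h0) ∩ p = ((V \ histAll h1) ∩ p).erase x := by
        rw [h0def, histAll_snoc]
        ext a
        simp only [Finset.mem_inter, Finset.mem_sdiff, Finset.mem_union, Finset.mem_insert,
          Finset.mem_singleton, Finset.mem_erase]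
        constructor
        · tauto
        · rintro ⟨hax, ⟨haV, haA⟩, hap⟩
          refine ⟨⟨haV, ?_⟩, hap⟩
          rintro (ha | rfl | rfl)
          · exact haA ha
          · exact hax rfl
          · exact hyp hap
      have hxA : x ∈ (V \ histAll h1) ∩ p := Finset.mem_inter.2 ⟨hx, hxp⟩
      have hUcard : ((V \ histAll h0) ∩ p).card + 1 = ((V \ histAll h1) ∩ p).card := by
        rw [hUeq, Finset.card_erase_of_mem hxA]
        have : 1 ≤ ((V \ histAll h1) ∩ p).card := Finset.card_pos.2 ⟨x, hxA⟩
        omega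
      have hinv : k + 1 ≤ (histClient h0 ∩ p).card + (((V \ histAll h0) ∩ p).card + 1) / 2 := by
        rw [hCcard]
        omega
      obtain ⟨h', hc', hfin', hinv'⟩ :=
        descent hσ p k (V \ histAll h0).card h0 hcons0 le_rfl hinv
      exact finish hσ hedge hc' hfin' hinv'
end

section
/- Let (φ, X) be an instance of Paired SAT with X = {(x_1,y_1),…,(x_n,y_n)} and φ a 3-CNF over these variables, and let H be the hypergraph associated to (φ, X) by the gadget construction. If Satisfier has a winning strategy in the Paired SAT game on (φ, X), then Waiter has a winning strategy in the Client-Waiter game on H. -/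
variable {α : Type*} [DecidableEq α]

/-- Vertices of the gadget hypergraph: for `i : Fin n`,
`(i, 0) = sᵢ⁰`, `(i, 1) = sᵢᵀ`, `(i, 2) = sᵢᶠ`, `(i, 3) = sᵢ¹`,
`(i, 4) = fᵢ⁰`, `(i, 5) = fᵢᵀ`, `(i, 6) = fᵢᵀ'`, `(i, 7) = fᵢᶠ`. -/
abbrev GVert (n : ℕ) := Fin n × Fin 8

def vs0 {n : ℕ} (i : Fin n) : GVert n := (i, 0)
def vsT {n : ℕ} (i : Fin n) : GVert n := (i, 1)
def vsF {n : ℕ} (i : Fin n) : GVert n := (i, 2)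
def vs1 {n : ℕ} (i : Fin n) : GVert n := (i, 3)
def vf0 {n : ℕ} (i : Fin n) : GVert n := (i, 4)
def vfT {n : ℕ} (i : Fin n) : GVert n := (i, 5)
def vfT' {n : ℕ} (i : Fin n) : GVert n := (i, 6)
def vfF {n : ℕ} (i : Fin n) : GVert n := (i, 7)

def SBlock {n : ℕ} (i : Fin n) : Finset (GVert n) := {vs0 i, vsT i, vsF i, vs1 i}
def FBlock {n : ℕ} (i : Fin n) : Finset (GVert n) := {vf0 i, vfT i, vfT' i, vfF i}

/-- The block edges: all 3-element subsets of each `Sᵢ` and of each `Fᵢ`. -/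
def blockEdges (n : ℕ) : Set (Finset (GVert n)) :=
  {e | ∃ i : Fin n, e.card = 3 ∧ (e ⊆ SBlock i ∨ e ⊆ FBlock i)}

/-- The pair edges `Pᵢ`. -/
def pairEdges (n : ℕ) : Set (Finset (GVert n)) :=
  {e | ∃ i : Fin n,
    e = {vs0 i, vsT i, vf0 i, vfT i} ∨ e = {vs0 i, vfF i, vfT i, vsF i} ∨
    e = {vs0 i, vfF i, vsT i, vfT' i} ∨ e = {vs0 i, vsF i, vf0 i, vfT' i}}

/-- `litSets ℓ` is the family `H_j^k` encoding that the literal `ℓ` is falsified;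
`Sum.inl i` is the variable `xᵢ` and `Sum.inr i` is the variable `yᵢ`. -/
def litSets {n : ℕ} : Lit (Fin n ⊕ Fin n) → Set (Finset (GVert n))
  | (Sum.inl i, true) => {{vs0 i, vsT i}}
  | (Sum.inl i, false) => {{vs0 i, vsF i}}
  | (Sum.inr i, true) => {{vf0 i, vfT i}, {vf0 i, vfT' i}}
  | (Sum.inr i, false) => {{vfF i}}

/-- The clause edges: for each clause `c` of `φ`, all unions `h₁ ∪ h₂ ∪ h₃` with
`h_k ∈ litSets (ℓ_k)`. -/
def clauseEdges (n : ℕ) (φ : CNF3 (Fin n ⊕ Fin n)) : Set (Finset (GVert n)) :=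
  {e | ∃ c ∈ φ, ∃ h1 ∈ litSets c.1, ∃ h2 ∈ litSets c.2.1, ∃ h3 ∈ litSets c.2.2,
    e = h1 ∪ h2 ∪ h3}

/-- All edges of the gadget hypergraph associated to the Paired SAT instance `(φ, X)`. -/
def gadgetEdges (n : ℕ) (φ : CNF3 (Fin n ⊕ Fin n)) : Set (Finset (GVert n)) :=
  blockEdges n ∪ pairEdges n ∪ clauseEdges n φ


/-! ### Auxiliary development for the reduction -/

section GadgetAux

variable {n : ℕ}

lemma CW_offer {β : Type*} [DecidableEq β] (E : Set (Finset β)) (U C : Finset β)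
    (a b : β) (ha : a ∈ U) (hb : b ∈ U) (hab : a ≠ b)
    (h1 : CWWaiterWins E (U \ {a, b}) (insert a C))
    (h2 : CWWaiterWins E (U \ {a, b}) (insert b C)) :
    CWWaiterWins E U C := by
  rw [CWWaiterWins]
  rw [dif_pos (show 2 ≤ U.card from Finset.one_lt_card.mpr ⟨a, ha, b, hb, hab⟩)]
  exact ⟨a, ha, b, hb, hab, h1, h2⟩

lemma pair_prod (i : Fin n) (a b : Fin 8) :
    ({(i, a), (i, b)} : Finset (GVert n)) = {i} ×ˢ ({a, b} : Finset (Fin 8)) := by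
  ext ⟨j, m⟩
  simp only [Finset.mem_insert, Finset.mem_singleton, Prod.mk.injEq, Finset.mem_product]
  tauto

lemma quad_prod (i : Fin n) (a b c d : Fin 8) :
    ({(i, a), (i, b), (i, c), (i, d)} : Finset (GVert n))
      = {i} ×ˢ ({a, b, c, d} : Finset (Fin 8)) := by
  ext ⟨j, m⟩
  simp only [Finset.mem_insert, Finset.mem_singleton, Prod.mk.injEq, Finset.mem_product]
  tauto

lemma single_prod (i : Fin n) (a : Fin 8) :
    ({(i, a)} : Finset (GVert n)) = {i} ×ˢ ({a} : Finset (Fin 8)) := by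
  ext ⟨j, m⟩
  simp only [Finset.mem_singleton, Prod.mk.injEq, Finset.mem_product]

lemma sblock_prod (i : Fin n) :
    SBlock i = {i} ×ˢ ({0, 1, 2, 3} : Finset (Fin 8)) := by
  show ({(i,0), (i,1), (i,2), (i,3)} : Finset (GVert n)) = _
  exact quad_prod i 0 1 2 3

lemma fblock_prod (i : Fin n) :
    FBlock i = {i} ×ˢ ({4, 5, 6, 7} : Finset (Fin 8)) := by
  show ({(i,4), (i,5), (i,6), (i,7)} : Finset (GVert n)) = _
  exact quad_prod i 4 5 6 7

lemma prod_sub {i : Fin n} {A K : Finset (Fin 8)}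
    (h : ({i} ×ˢ A : Finset (GVert n)) ⊆ {i} ×ˢ K) : A ⊆ K := by
  intro a ha
  have : ((i, a) : GVert n) ∈ {i} ×ˢ K := h (by simp [Finset.mem_product, ha])
  simpa [Finset.mem_product] using this

/-- Local correctness condition on the set `K ⊆ Fin 8` of Client's picks in the gadget of one
pair, when Satisfier assigned `b` to the `x`-variable and Waiter extracted `c` for the
`y`-variable. -/
abbrev KGood (b c : Bool) (K : Finset (Fin 8)) : Prop :=
  (¬ ({0, if b then 1 else 2} : Finset (Fin 8)) ⊆ K) ∧
  (if c then (¬ ({4, 5} : Finset (Fin 8)) ⊆ K ∧ ¬ ({4, 6} : Finset (Fin 8)) ⊆ K)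
   else ((7 : Fin 8) ∉ K)) ∧
  ((({0, 1, 2, 3} : Finset (Fin 8)) ∩ K).card ≤ 2) ∧
  ((({4, 5, 6, 7} : Finset (Fin 8)) ∩ K).card ≤ 2) ∧
  ¬ ({0, 1, 4, 5} : Finset (Fin 8)) ⊆ K ∧ ¬ ({0, 7, 5, 2} : Finset (Fin 8)) ⊆ K ∧
  ¬ ({0, 7, 1, 6} : Finset (Fin 8)) ⊆ K ∧ ¬ ({0, 2, 4, 6} : Finset (Fin 8)) ⊆ K

/-- Correctness of Client's set `C` relative to gadget `i` with assigned values `b, c`. -/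
def Good (i : Fin n) (b c : Bool) (C : Finset (GVert n)) : Prop :=
  (∀ h ∈ litSets (n := n) (Sum.inl i, b), ¬ h ⊆ C) ∧
  (∀ h ∈ litSets (n := n) (Sum.inr i, c), ¬ h ⊆ C) ∧
  (∀ e : Finset (GVert n), e.card = 3 → e ⊆ SBlock i → ¬ e ⊆ C) ∧
  (∀ e : Finset (GVert n), e.card = 3 → e ⊆ FBlock i → ¬ e ⊆ C) ∧
  (∀ e : Finset (GVert n),
    (e = {vs0 i, vsT i, vf0 i, vfT i} ∨ e = {vs0 i, vfF i, vfT i, vsF i} ∨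
     e = {vs0 i, vfF i, vsT i, vfT' i} ∨ e = {vs0 i, vsF i, vf0 i, vfT' i}) → ¬ e ⊆ C)

lemma card3_block {i : Fin n} {S4 K : Finset (Fin 8)} (hK : (S4 ∩ K).card ≤ 2)
    {e : Finset (GVert n)} (h3 : e.card = 3) (heS : e ⊆ {i} ×ˢ S4)
    (heK : e ⊆ {i} ×ˢ K) : False := by
  have hsub : e ⊆ {i} ×ˢ (S4 ∩ K) := by
    intro v hv
    have h1 := heS hv
    have h2 := heK hv
    simp only [Finset.mem_product, Finset.mem_singleton, Finset.mem_inter] at h1 h2 ⊢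
    exact ⟨h1.1, h1.2, h2.2⟩
  have := Finset.card_le_card hsub
  rw [h3, Finset.card_product, Finset.card_singleton, one_mul] at this
  omega

lemma good_of_K (i : Fin n) (b c : Bool) (K : Finset (Fin 8)) (hK : KGood b c K) :
    Good i b c ({i} ×ˢ K) := by
  obtain ⟨hS, hF, hcs, hcf, hp1, hp2, hp3, hp4⟩ := hK
  refine ⟨?_, ?_, ?_, ?_, ?_⟩
  · intro h hh hsub
    cases b <;> simp only [litSets, Set.mem_singleton_iff] at hh <;> subst hh
    · exact hS (prod_sub (by rw [← pair_prod]; exact hsub))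
    · exact hS (prod_sub (by rw [← pair_prod]; exact hsub))
  · intro h hh hsub
    cases c
    · simp only [litSets, Set.mem_singleton_iff] at hh
      subst hh
      have : ((i, 7) : GVert n) ∈ {i} ×ˢ K := hsub (Finset.mem_singleton_self _)
      simp only [Finset.mem_product, Finset.mem_singleton] at this
      exact hF this.2
    · simp only [litSets, Set.mem_insert_iff, Set.mem_singleton_iff] at hh
      rcases hh with rfl | rfl
      · exact hF.1 (prod_sub (by rw [← pair_prod]; exact hsub))
      · exact hF.2 (prod_sub (by rw [← pair_prod]; exact hsub))
  · intro e h3 heS hsub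
    rw [sblock_prod] at heS
    exact card3_block hcs h3 heS hsub
  · intro e h3 heF hsub
    rw [fblock_prod] at heF
    exact card3_block hcf h3 heF hsub
  · intro e hdis hsub
    rcases hdis with rfl | rfl | rfl | rfl
    · exact hp1 (prod_sub (by rw [← quad_prod]; exact hsub))
    · exact hp2 (prod_sub (by rw [← quad_prod]; exact hsub))
    · exact hp3 (prod_sub (by rw [← quad_prod]; exact hsub))
    · exact hp4 (prod_sub (by rw [← quad_prod]; exact hsub))

lemma good_mono {i : Fin n} {b c : Bool} {C C' : Finset (GVert n)}
    (hloc : ∀ v ∈ C', (v : GVert n).1 = i → v ∈ C) (h : Good i b c C) :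
    Good i b c C' := by
  have key : ∀ e : Finset (GVert n), (∀ v ∈ e, (v : GVert n).1 = i) → e ⊆ C' → e ⊆ C :=
    fun e he hsub v hv => hloc v (hsub hv) (he v hv)
  obtain ⟨h1, h2, h3, h4, h5⟩ := h
  refine ⟨?_, ?_, ?_, ?_, ?_⟩
  · intro hh hmem hsub
    refine h1 hh hmem (key _ ?_ hsub)
    cases b <;> simp only [litSets, Set.mem_singleton_iff] at hmem <;> subst hmem <;>
      (intro v hv
       simp only [Finset.mem_insert, Finset.mem_singleton, vs0, vsT, vsF] at hv
       rcases hv with rfl | rfl <;> rfl)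
  · intro hh hmem hsub
    refine h2 hh hmem (key _ ?_ hsub)
    cases c
    · simp only [litSets, Set.mem_singleton_iff] at hmem
      subst hmem
      intro v hv
      simp only [Finset.mem_singleton, vfF] at hv
      subst hv; rfl
    · simp only [litSets, Set.mem_insert_iff, Set.mem_singleton_iff] at hmem
      rcases hmem with rfl | rfl <;>
        (intro v hv
         simp only [Finset.mem_insert, Finset.mem_singleton, vf0, vfT, vfT'] at hv
         rcases hv with rfl | rfl <;> rfl)
  · intro e h3' heS hsub
    refine h3 e h3' heS (key _ ?_ hsub)
    intro v hv
    have := heS hv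
    rw [sblock_prod] at this
    simp only [Finset.mem_product, Finset.mem_singleton] at this
    exact this.1
  · intro e h3' heF hsub
    refine h4 e h3' heF (key _ ?_ hsub)
    intro v hv
    have := heF hv
    rw [fblock_prod] at this
    simp only [Finset.mem_product, Finset.mem_singleton] at this
    exact this.1
  · intro e hdis hsub
    refine h5 e hdis (key _ ?_ hsub)
    rcases hdis with rfl | rfl | rfl | rfl <;>
      (intro v hv
       simp only [Finset.mem_insert, Finset.mem_singleton, vs0, vsT, vsF, vs1,
         vf0, vfT, vfT', vfF] at hv
       rcases hv with rfl | rfl | rfl | rfl <;> rfl)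

lemma offer2 (E : Set (Finset (GVert n))) (U C : Finset (GVert n)) (i : Fin n)
    (k l k' l' : Fin 8)
    (hd : k ≠ l ∧ k' ≠ l' ∧ k ≠ k' ∧ k ≠ l' ∧ l ≠ k' ∧ l ≠ l')
    (hU : ∀ m ∈ ({k, l, k', l'} : Finset (Fin 8)), ((i, m) : GVert n) ∈ U)
    (H : ∀ a ∈ ({k, l} : Finset (Fin 8)), ∀ b ∈ ({k', l'} : Finset (Fin 8)),
      CWWaiterWins E (U \ {i} ×ˢ ({k, l, k', l'} : Finset (Fin 8)))
        (insert (i, b) (insert (i, a) C))) :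
    CWWaiterWins E U C := by
  obtain ⟨h1, h2, h3, h4, h5, h6⟩ := hd
  have hsd : (U \ ({(i, k), (i, l)} : Finset (GVert n))) \ ({(i, k'), (i, l')} : Finset (GVert n))
      = U \ {i} ×ˢ ({k, l, k', l'} : Finset (Fin 8)) := by
    ext ⟨j, m⟩
    simp only [Finset.mem_sdiff, Finset.mem_insert, Finset.mem_singleton,
      Finset.mem_product, Prod.mk.injEq]
    tauto
  have hm1 : ((i, k') : GVert n) ∈ U \ ({(i, k), (i, l)} : Finset (GVert n)) := by
    rw [Finset.mem_sdiff]
    refine ⟨hU k' (by simp), ?_⟩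
    simp only [Finset.mem_insert, Finset.mem_singleton, Prod.mk.injEq]
    push_neg
    exact ⟨fun _ => (Ne.symm h3), fun _ => (Ne.symm h5)⟩
  have hm2 : ((i, l') : GVert n) ∈ U \ ({(i, k), (i, l)} : Finset (GVert n)) := by
    rw [Finset.mem_sdiff]
    refine ⟨hU l' (by simp), ?_⟩
    simp only [Finset.mem_insert, Finset.mem_singleton, Prod.mk.injEq]
    push_neg
    exact ⟨fun _ => (Ne.symm h4), fun _ => (Ne.symm h6)⟩
  refine CW_offer E U C (i, k) (i, l) (hU k (by simp)) (hU l (by simp))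
    (by simp only [ne_eq, Prod.mk.injEq, not_and]; exact fun _ => h1) ?_ ?_
  · refine CW_offer E _ _ (i, k') (i, l') hm1 hm2
      (by simp only [ne_eq, Prod.mk.injEq, not_and]; exact fun _ => h2) ?_ ?_
    · rw [hsd]; exact H k (by simp) k' (by simp)
    · rw [hsd]; exact H k (by simp) l' (by simp)
  · refine CW_offer E _ _ (i, k') (i, l') hm1 hm2
      (by simp only [ne_eq, Prod.mk.injEq, not_and]; exact fun _ => h2) ?_ ?_
    · rw [hsd]; exact H l (by simp) k' (by simp)
    · rw [hsd]; exact H l (by simp) l' (by simp)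

lemma U_round (R : Finset (Fin n)) (i : Fin n) (A B : Finset (Fin 8))
    (h : A ∪ B = Finset.univ) :
    ((R ×ˢ (Finset.univ : Finset (Fin 8))) \ {i} ×ˢ A) \ {i} ×ˢ B
      = (R.erase i) ×ˢ (Finset.univ : Finset (Fin 8)) := by
  ext ⟨j, m⟩
  have hm : m ∈ A ∨ m ∈ B := by
    have : m ∈ A ∪ B := by rw [h]; exact Finset.mem_univ m
    simpa [Finset.mem_union] using this
  simp only [Finset.mem_sdiff, Finset.mem_product, Finset.mem_singleton, Finset.mem_univ,
    and_true, Finset.mem_erase]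
  constructor
  · rintro ⟨⟨hj, hA⟩, hB⟩
    refine ⟨fun hji => ?_, hj⟩
    subst hji
    rcases hm with h' | h'
    · exact hA ⟨rfl, h'⟩
    · exact hB ⟨rfl, h'⟩
  · rintro ⟨hne, hj⟩
    exact ⟨⟨hj, fun hc => hne hc.1⟩, fun hc => hne hc.1⟩

lemma ins4 (i : Fin n) (a b c d : Fin 8) (C : Finset (GVert n)) :
    insert ((i, d) : GVert n) (insert (i, c) (insert (i, b) (insert (i, a) C)))
      = ({i} ×ˢ ({a, b, c, d} : Finset (Fin 8))) ∪ C := by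
  ext ⟨j, m⟩
  simp only [Finset.mem_insert, Finset.mem_union, Finset.mem_product, Finset.mem_singleton,
    Prod.mk.injEq]
  tauto

lemma key_lemma (n : ℕ) (φ : CNF3 (Fin n ⊕ Fin n)) (R : Finset (Fin n)) :
    ∀ (x y : Fin n → Bool) (C : Finset (GVert n)),
      (∀ j ∈ R, ∀ k : Fin 8, ((j, k) : GVert n) ∉ C) →
      (∀ j ∉ R, Good j (x j) (y j) C) →
      PSSatWins (fun X Y => evalCNF (Sum.elim X Y) φ) R x y →
      CWWaiterWins (gadgetEdges n φ) (R ×ˢ (Finset.univ : Finset (Fin 8))) C := by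
  induction R using Finset.strongInduction with
  | _ R IH =>
  intro x y C hCR hGood hsat
  rw [PSSatWins] at hsat
  by_cases hR : R.Nonempty
  · rw [dif_pos hR] at hsat
    obtain ⟨i, hi, b, hstrat⟩ := hsat
    have hRi : R.erase i ⊂ R := Finset.erase_ssubset hi
    -- the continuation after one full round at gadget `i`, Client picked `{i} ×ˢ K`
    have leaf : ∀ (K : Finset (Fin 8)) (c : Bool), KGood b c K →
        CWWaiterWins (gadgetEdges n φ) ((R.erase i) ×ˢ (Finset.univ : Finset (Fin 8)))
          (({i} ×ˢ K) ∪ C) := by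
      intro K c hK
      refine IH (R.erase i) hRi (Function.update x i b) (Function.update y i c)
        (({i} ×ˢ K) ∪ C) ?_ ?_ (hstrat c)
      · intro j hj k hk
        rcases Finset.mem_union.mp hk with h | h
        · simp only [Finset.mem_product, Finset.mem_singleton] at h
          exact (Finset.ne_of_mem_erase hj) h.1
        · exact hCR j (Finset.mem_of_mem_erase hj) k h
      · intro j hj
        by_cases hji : j = i
        · subst hji
          rw [Function.update_self, Function.update_self]
          refine good_mono ?_ (good_of_K j b c K hK)
          intro v hv hv1
          rcases Finset.mem_union.mp hv with h | h
          · exact h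
          · exfalso
            obtain ⟨v1, v2⟩ := v
            simp only at hv1
            subst hv1
            exact hCR v1 hi v2 h
        · have hjR : j ∉ R := fun hc => hj (Finset.mem_erase.mpr ⟨hji, hc⟩)
          rw [Function.update_of_ne hji, Function.update_of_ne hji]
          refine good_mono ?_ (hGood j hjR)
          intro v hv hv1
          rcases Finset.mem_union.mp hv with h | h
          · exfalso
            simp only [Finset.mem_product, Finset.mem_singleton] at h
            exact hji (hv1 ▸ h.1)
          · exact h
    -- one full F-stage after the S-stage
    have Fstage : ∀ (a a' f1 f2 f3 f4 : Fin 8),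
        (f1 ≠ f2 ∧ f3 ≠ f4 ∧ f1 ≠ f3 ∧ f1 ≠ f4 ∧ f2 ≠ f3 ∧ f2 ≠ f4) →
        (({f1, f2, f3, f4} : Finset (Fin 8)) = {4, 5, 6, 7}) →
        (∀ q ∈ ({f1, f2} : Finset (Fin 8)), ∀ q' ∈ ({f3, f4} : Finset (Fin 8)),
          KGood b true {a, a', q, q'} ∨ KGood b false {a, a', q, q'}) →
        CWWaiterWins (gadgetEdges n φ)
          ((R ×ˢ (Finset.univ : Finset (Fin 8))) \ {i} ×ˢ ({0, 1, 2, 3} : Finset (Fin 8)))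
          (insert ((i, a') : GVert n) (insert (i, a) C)) := by
      intro a a' f1 f2 f3 f4 hdist hsub hKall
      refine offer2 _ _ _ i f1 f2 f3 f4 hdist ?_ ?_
      · intro m hm
        have hmem : m ∈ ({4, 5, 6, 7} : Finset (Fin 8)) := hsub ▸ hm
        have hm4 : m ∉ ({0, 1, 2, 3} : Finset (Fin 8)) := by
          intro hc
          have : m ∈ (({0, 1, 2, 3} : Finset (Fin 8)) ∩ {4, 5, 6, 7}) :=
            Finset.mem_inter.mpr ⟨hc, hmem⟩
          rw [show (({0, 1, 2, 3} : Finset (Fin 8)) ∩ {4, 5, 6, 7}) = ∅ from by decide] at this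
          exact absurd this (Finset.notMem_empty m)
        rw [Finset.mem_sdiff]
        constructor
        · simp only [Finset.mem_product, Finset.mem_univ, and_true]
          exact hi
        · simp only [Finset.mem_product, Finset.mem_singleton]
          exact fun hc => hm4 hc.2
      · intro q hq q' hq'
        rw [U_round R i {0, 1, 2, 3} {f1, f2, f3, f4} (by rw [hsub]; decide)]
        rw [ins4 i a a' q q' C]
        rcases hKall q hq q' hq' with h | h
        · exact leaf _ true h
        · exact leaf _ false h
    cases b with
    | true =>
      refine offer2 _ _ _ i 0 1 2 3 (by decide)
        (by intro m _; simp [Finset.mem_product, hi]) ?_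
      intro a ha a' ha'
      simp only [Finset.mem_insert, Finset.mem_singleton] at ha ha'
      rcases ha with rfl | rfl <;> rcases ha' with rfl | rfl
      · exact Fstage 0 2 4 6 7 5 (by decide) (by decide) (by decide)
      · exact Fstage 0 3 4 7 5 6 (by decide) (by decide) (by decide)
      · exact Fstage 1 2 4 7 5 6 (by decide) (by decide) (by decide)
      · exact Fstage 1 3 4 7 5 6 (by decide) (by decide) (by decide)
    | false =>
      refine offer2 _ _ _ i 0 2 1 3 (by decide)
        (by intro m _; simp [Finset.mem_product, hi]) ?_
      have hset : ({0, 2, 1, 3} : Finset (Fin 8)) = {0, 1, 2, 3} := by decide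
      rw [hset]
      intro a ha a' ha'
      simp only [Finset.mem_insert, Finset.mem_singleton] at ha ha'
      rcases ha with rfl | rfl <;> rcases ha' with rfl | rfl
      · exact Fstage 0 1 4 5 7 6 (by decide) (by decide) (by decide)
      · exact Fstage 0 3 4 7 5 6 (by decide) (by decide) (by decide)
      · exact Fstage 2 1 4 7 5 6 (by decide) (by decide) (by decide)
      · exact Fstage 2 3 4 7 5 6 (by decide) (by decide) (by decide)
  · -- terminal position: all pairs played
    rw [dif_neg hR] at hsat
    rw [Finset.not_nonempty_iff_eq_empty] at hR
    subst hR
    have hG : ∀ j, Good j (x j) (y j) C := fun j => hGood j (by simp)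
    rw [Finset.empty_product, CWWaiterWins, dif_neg (by simp)]
    simp only [Finset.union_empty]
    intro e he hsub
    simp only [gadgetEdges, Set.mem_union] at he
    rcases he with (hb | hp) | hc
    · obtain ⟨i, h3, hSF⟩ := hb
      rcases hSF with hS | hF
      · exact (hG i).2.2.1 e h3 hS hsub
      · exact (hG i).2.2.2.1 e h3 hF hsub
    · obtain ⟨i, hdis⟩ := hp
      exact (hG i).2.2.2.2 e hdis hsub
    · obtain ⟨⟨⟨v1, p1⟩, ⟨v2, p2⟩, ⟨v3, p3⟩⟩, hcl, h1, hh1, h2, hh2, h3, hh3, rfl⟩ := hc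
      have hclause := hsat _ hcl
      simp only [evalClause, evalLit] at hclause
      rcases hclause with hl | hl | hl
      · cases v1 with
        | inl i =>
          simp only [Sum.elim_inl] at hl
          subst hl
          exact (hG i).1 h1 hh1
            ((Finset.subset_union_left.trans Finset.subset_union_left).trans hsub)
        | inr i =>
          simp only [Sum.elim_inr] at hl
          subst hl
          exact (hG i).2.1 h1 hh1
            ((Finset.subset_union_left.trans Finset.subset_union_left).trans hsub)
      · cases v2 with
        | inl i =>
          simp only [Sum.elim_inl] at hl
          subst hl
          exact (hG i).1 h2 hh2
            ((Finset.subset_union_right.trans Finset.subset_union_left).trans hsub)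
        | inr i =>
          simp only [Sum.elim_inr] at hl
          subst hl
          exact (hG i).2.1 h2 hh2
            ((Finset.subset_union_right.trans Finset.subset_union_left).trans hsub)
      · cases v3 with
        | inl i =>
          simp only [Sum.elim_inl] at hl
          subst hl
          exact (hG i).1 h3 hh3 (Finset.subset_union_right.trans hsub)
        | inr i =>
          simp only [Sum.elim_inr] at hl
          subst hl
          exact (hG i).2.1 h3 hh3 (Finset.subset_union_right.trans hsub)

end GadgetAux

/-- If Satisfier has a winning strategy in the Paired SAT game on `(φ, X)` with
`X = {(x₁, y₁), …, (xₙ, yₙ)}`, then Waiter has a winning strategy in the Client-Waiter game on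
the associated gadget hypergraph. -/
theorem pairedSAT_satisfier_to_waiter (n : ℕ) (φ : CNF3 (Fin n ⊕ Fin n))
    (hsat : PSSatWins (fun X Y => evalCNF (Sum.elim X Y) φ) Finset.univ
      (fun _ => false) (fun _ => false)) :
    CWWaiterWins (gadgetEdges n φ) (Finset.univ : Finset (GVert n)) ∅ := by
  have h := key_lemma n φ Finset.univ (fun _ => false) (fun _ => false) ∅
    (by simp) (fun j hj => absurd (Finset.mem_univ j) hj) hsat
  rwa [Finset.univ_product_univ] at h
end

section
/- Let H = (V, E) be a hypergraph of rank k with E nonempty, let m = min_{e∈E} |e|, and suppose m < k. Let A = {a_1,…,a_{2(k−1)}} be 2(k−1) new vertices not in V, let U be the set of all k-element subsets of A, let L = {e ∪ {a_1} : e ∈ E, |e| = m}, and let H' = (V ∪ A, E') with E' = {e ∈ E : |e| ≥ m+1} ∪ L ∪ U. Then H' has rank k, every edge of H' has size at least m+1, and Client has a winning strategy in the Client-Waiter game on H if and only if Client has a winning strategy in the Client-Waiter game on H'. -/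
variable {α : Type*} [DecidableEq α]

/-- Client-Waiter game played on the edge set `E`: Client has a winning strategy from the
position in which `U` is the set of unclaimed vertices and `C` is the set of vertices already
claimed by Client.  While at least two vertices are unclaimed, Waiter offers two distinct
unclaimed vertices `x, y`; Client claims one of them and Waiter gets the other.  A last
remaining unclaimed vertex goes to Client.  Client wins if at the end his vertices contain an
edge of `E`. -/
def CWClientWins (E : Set (Finset α)) (U C : Finset α) : Prop :=
  if _h : 2 ≤ U.card then
    ∀ x ∈ U, ∀ y ∈ U, x ≠ y →
      CWClientWins E (U \ {x, y}) (insert x C) ∨ CWClientWins E (U \ {x, y}) (insert y C)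
  else ∃ e ∈ E, e ⊆ C ∪ U
termination_by U.card
decreasing_by all_goals exact card_sdiff_pair_lt (by assumption)

lemma CWClientWins_iff (E : Set (Finset α)) (U C : Finset α) :
    CWClientWins E U C ↔
      if 2 ≤ U.card then
        ∀ x ∈ U, ∀ y ∈ U, x ≠ y →
          CWClientWins E (U \ {x, y}) (insert x C) ∨ CWClientWins E (U \ {x, y}) (insert y C)
      else ∃ e ∈ E, e ⊆ C ∪ U := by
  rw [CWClientWins]
  split <;> simp

lemma sdiff_pair_ssubset {W : Finset α} {x y : α} (hx : x ∈ W) : W \ {x, y} ⊂ W := by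
  refine (Finset.ssubset_iff_of_subset Finset.sdiff_subset).mpr ⟨x, hx, ?_⟩
  simp

lemma insert_disjoint_sdiff {C' W : Finset α} {x y c : α} (hdis : Disjoint C' W)
    (hc : c = x ∨ c = y) : Disjoint (insert c C') (W \ {x, y}) := by
  rw [Finset.disjoint_left]
  intro a ha hb
  rw [Finset.mem_sdiff, Finset.mem_insert, Finset.mem_singleton] at hb
  rcases Finset.mem_insert.mp ha with rfl | ha
  · exact hb.2 (by tauto)
  · exact Finset.disjoint_left.mp hdis ha hb.1

lemma sdiff_pair_inter (W S : Finset α) (x y : α) :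
    (W \ {x, y}) ∩ S = (W ∩ S) \ {x, y} := by
  ext a
  simp only [Finset.mem_inter, Finset.mem_sdiff]
  tauto

lemma sdiff_pair_inter_none {W S : Finset α} {x y : α} (hx : x ∉ S) (hy : y ∉ S) :
    (W \ {x, y}) ∩ S = W ∩ S := by
  ext a
  simp only [Finset.mem_inter, Finset.mem_sdiff, Finset.mem_insert, Finset.mem_singleton]
  constructor
  · rintro ⟨⟨h1, _⟩, h3⟩; exact ⟨h1, h3⟩
  · rintro ⟨h1, h3⟩
    refine ⟨⟨h1, ?_⟩, h3⟩
    rintro (rfl | rfl)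
    · exact hx h3
    · exact hy h3

lemma sdiff_pair_inter_left {W S : Finset α} {x : α} (y : α) (hx : x ∉ S) :
    (W \ {x, y}) ∩ S = (W ∩ S) \ {y} := by
  ext a
  simp only [Finset.mem_inter, Finset.mem_sdiff, Finset.mem_insert, Finset.mem_singleton]
  constructor
  · rintro ⟨⟨h1, h2⟩, h3⟩
    exact ⟨⟨h1, h3⟩, fun h => h2 (Or.inr h)⟩
  · rintro ⟨⟨h1, h3⟩, h2⟩
    refine ⟨⟨h1, ?_⟩, h3⟩
    rintro (rfl | rfl)
    · exact hx h3
    · exact h2 rfl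

lemma card_pair_le (x y : α) : ({x, y} : Finset α).card ≤ 2 :=
  (Finset.card_insert_le _ _).trans (by simp)

lemma inter_card_sdiff_le (W S : Finset α) (x y : α) :
    (W ∩ S).card ≤ ((W \ {x, y}) ∩ S).card + 2 := by
  rw [sdiff_pair_inter]
  calc (W ∩ S).card ≤ ((W ∩ S) \ {x, y}).card + ({x, y} : Finset α).card :=
        Finset.card_le_card_sdiff_add_card
    _ ≤ ((W ∩ S) \ {x, y}).card + 2 := by
        have := card_pair_le x y; omega

lemma insert_inter_card {C' W S : Finset α} {x : α} (hdis : Disjoint C' W) (hxW : x ∈ W)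
    (hxS : x ∈ S) : ((insert x C') ∩ S).card = (C' ∩ S).card + 1 := by
  rw [Finset.insert_inter_of_mem hxS]
  exact Finset.card_insert_of_notMem fun h =>
    Finset.disjoint_left.mp hdis (Finset.mem_inter.mp h).1 hxW

/-- From a position where Client's claimed `A`-vertices plus unclaimed `A`-vertices are
enough (counted with surplus at least one), Client wins just by grabbing `A`-vertices. -/
lemma cw_grab (E' : Set (Finset α)) (A : Finset α) (k : ℕ)
    (hUin : ∀ f : Finset α, f ⊆ A → f.card = k → f ∈ E') :
    ∀ W C' : Finset α, Disjoint C' W →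
      2 * k ≤ 2 * (C' ∩ A).card + (W ∩ A).card + 1 → CWClientWins E' W C' := by
  intro W
  induction W using Finset.strongInduction with
  | _ W ih =>
    intro C' hdis har
    rw [CWClientWins_iff]
    by_cases h2 : 2 ≤ W.card
    · rw [if_pos h2]
      intro x hx y hy hxy
      by_cases hxA : x ∈ A
      · left
        refine ih (W \ {x, y}) (sdiff_pair_ssubset hx) _
          (insert_disjoint_sdiff hdis (Or.inl rfl)) ?_
        have h1 : ((insert x C') ∩ A).card = (C' ∩ A).card + 1 := insert_inter_card hdis hx hxA
        have h2' := inter_card_sdiff_le W A x y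
        omega
      · by_cases hyA : y ∈ A
        · right
          refine ih (W \ {x, y}) (sdiff_pair_ssubset hx) _
            (insert_disjoint_sdiff hdis (Or.inr rfl)) ?_
          have h1 : ((insert y C') ∩ A).card = (C' ∩ A).card + 1 := insert_inter_card hdis hy hyA
          have h3 : (W \ {x, y}) ∩ A = (W ∩ A) \ {y} := sdiff_pair_inter_left y hxA
          have h4 : (W ∩ A).card ≤ ((W ∩ A) \ {y}).card + 1 := by
            calc (W ∩ A).card ≤ ((W ∩ A) \ {y}).card + ({y} : Finset α).card :=
                  Finset.card_le_card_sdiff_add_card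
              _ = ((W ∩ A) \ {y}).card + 1 := by simp
          rw [h3]
          omega
        · left
          refine ih (W \ {x, y}) (sdiff_pair_ssubset hx) _
            (insert_disjoint_sdiff hdis (Or.inl rfl)) ?_
          have h1 : (insert x C') ∩ A = C' ∩ A := Finset.insert_inter_of_notMem hxA
          have h3 : (W \ {x, y}) ∩ A = W ∩ A := sdiff_pair_inter_none hxA hyA
          rw [h1, h3]
          omega
    · rw [if_neg h2]
      have hdisA : Disjoint (C' ∩ A) (W ∩ A) :=
        Finset.disjoint_of_subset_left Finset.inter_subset_left
          (Finset.disjoint_of_subset_right Finset.inter_subset_left hdis)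
      have hcard : ((C' ∩ A) ∪ (W ∩ A)).card = (C' ∩ A).card + (W ∩ A).card :=
        Finset.card_union_of_disjoint hdisA
      have hk : k ≤ ((C' ∩ A) ∪ (W ∩ A)).card := by omega
      obtain ⟨f, hfsub, hfcard⟩ := Finset.exists_subset_card_eq hk
      refine ⟨f, hUin f (hfsub.trans (Finset.union_subset Finset.inter_subset_right
        Finset.inter_subset_right)) hfcard, ?_⟩
      refine hfsub.trans (Finset.union_subset ?_ ?_)
      · exact Finset.inter_subset_left.trans Finset.subset_union_left
      · exact Finset.inter_subset_left.trans Finset.subset_union_right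

/-- Forward simulation: if Client wins the simulated game on `V`, he wins the augmented game. -/
lemma cw_fwd (E E' : Set (Finset α)) (V A : Finset α) (k m : ℕ) (a₁ : α)
    (hAV : Disjoint A V) (hA : A.card = 2 * (k - 1)) (hk1 : 1 ≤ k)
    (hmin : ∀ e ∈ E, m ≤ e.card)
    (hUin : ∀ f : Finset α, f ⊆ A → f.card = k → f ∈ E')
    (hE1in : ∀ e ∈ E, m + 1 ≤ e.card → e ∈ E')
    (hLin : ∀ e ∈ E, e.card = m → insert a₁ e ∈ E') :
    ∀ W C' : Finset α, W ⊆ V ∪ A → Disjoint C' W →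
      a₁ ∈ C' ∪ (W ∩ A) →
      2 * (C' ∩ A).card + (W ∩ A).card = A.card →
      CWClientWins E (W ∩ V) (C' ∩ V) → CWClientWins E' W C' := by
  intro W
  induction W using Finset.strongInduction with
  | _ W ih =>
    intro C' hWVA hdis ha₁m har hsim
    rw [CWClientWins_iff]
    by_cases h2 : 2 ≤ W.card
    · rw [if_pos h2]
      intro x hx y hy hxy
      have hxVA := Finset.mem_union.mp (hWVA hx)
      have hyVA := Finset.mem_union.mp (hWVA hy)
      by_cases hxA : x ∈ A
      · by_cases hyA : y ∈ A
        · -- both offered vertices in A; claim a₁ if offered, else x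
          have hxy2 : ({x, y} : Finset α) ⊆ W ∩ A := by
            intro a ha
            rcases Finset.mem_insert.mp ha with rfl | ha
            · exact Finset.mem_inter.mpr ⟨hx, hxA⟩
            · rw [Finset.mem_singleton] at ha; subst ha
              exact Finset.mem_inter.mpr ⟨hy, hyA⟩
          have hcard2 : ((W ∩ A) \ {x, y}).card + 2 = (W ∩ A).card := by
            have := Finset.card_sdiff_add_card_eq_card hxy2
            rw [Finset.card_pair hxy] at this
            exact this
          have hWA : (W \ {x, y}) ∩ A = (W ∩ A) \ {x, y} := sdiff_pair_inter W A x y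
          have hWV : (W \ {x, y}) ∩ V = W ∩ V :=
            sdiff_pair_inter_none (Finset.disjoint_left.mp hAV hxA)
              (Finset.disjoint_left.mp hAV hyA)
          by_cases hya : y = a₁
          · right
            refine ih (W \ {x, y}) (sdiff_pair_ssubset hx) _
              ((Finset.sdiff_subset).trans hWVA)
              (insert_disjoint_sdiff hdis (Or.inr rfl)) ?_ ?_ ?_
            · exact Finset.mem_union_left _ (Finset.mem_insert.mpr (Or.inl hya.symm))
            · rw [hWA, insert_inter_card hdis hy hyA]
              omega
            · rw [hWV, Finset.insert_inter_of_notMem (Finset.disjoint_left.mp hAV hyA)]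
              exact hsim
          · left
            refine ih (W \ {x, y}) (sdiff_pair_ssubset hx) _
              ((Finset.sdiff_subset).trans hWVA)
              (insert_disjoint_sdiff hdis (Or.inl rfl)) ?_ ?_ ?_
            · rcases Finset.mem_union.mp ha₁m with h | h
              · exact Finset.mem_union_left _ (Finset.mem_insert_of_mem h)
              · by_cases hxa : x = a₁
                · exact Finset.mem_union_left _ (Finset.mem_insert.mpr (Or.inl hxa.symm))
                · refine Finset.mem_union_right _ ?_
                  rw [hWA, Finset.mem_sdiff]
                  refine ⟨h, ?_⟩
                  simp only [Finset.mem_insert, Finset.mem_singleton]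
                  rintro (rfl | rfl)
                  · exact hxa rfl
                  · exact hya rfl
            · rw [hWA, insert_inter_card hdis hx hxA]
              omega
            · rw [hWV, Finset.insert_inter_of_notMem (Finset.disjoint_left.mp hAV hxA)]
              exact hsim
        · -- x ∈ A, y ∈ V: mixed offer, claim x and grab A-vertices
          have hyV : y ∈ V := hyVA.resolve_right hyA
          left
          refine cw_grab E' A k hUin _ _ (insert_disjoint_sdiff hdis (Or.inl rfl)) ?_
          have hWA : (W \ {x, y}) ∩ A = (W ∩ A) \ {x} := by
            rw [Finset.pair_comm]
            exact sdiff_pair_inter_left x hyA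
          have hxWA : x ∈ W ∩ A := Finset.mem_inter.mpr ⟨hx, hxA⟩
          have hcard1 : ((W ∩ A) \ {x}).card + 1 = (W ∩ A).card := by
            have := Finset.card_sdiff_add_card_eq_card
              (Finset.singleton_subset_iff.mpr hxWA)
            simpa using this
          rw [hWA, insert_inter_card hdis hx hxA]
          omega
      · have hxV : x ∈ V := hxVA.resolve_right hxA
        by_cases hyA : y ∈ A
        · -- x ∈ V, y ∈ A: mixed offer, claim y and grab A-vertices
          right
          refine cw_grab E' A k hUin _ _ (insert_disjoint_sdiff hdis (Or.inr rfl)) ?_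
          have hWA : (W \ {x, y}) ∩ A = (W ∩ A) \ {y} := sdiff_pair_inter_left y hxA
          have hyWA : y ∈ W ∩ A := Finset.mem_inter.mpr ⟨hy, hyA⟩
          have hcard1 : ((W ∩ A) \ {y}).card + 1 = (W ∩ A).card := by
            have := Finset.card_sdiff_add_card_eq_card
              (Finset.singleton_subset_iff.mpr hyWA)
            simpa using this
          rw [hWA, insert_inter_card hdis hy hyA]
          omega
        · -- both in V: follow the simulated strategy
          have hyV : y ∈ V := hyVA.resolve_right hyA
          have hsim2 : 2 ≤ (W ∩ V).card := by
            rw [← Finset.card_pair hxy]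
            refine Finset.card_le_card ?_
            intro a ha
            rcases Finset.mem_insert.mp ha with rfl | ha
            · exact Finset.mem_inter.mpr ⟨hx, hxV⟩
            · rw [Finset.mem_singleton] at ha; subst ha
              exact Finset.mem_inter.mpr ⟨hy, hyV⟩
          rw [CWClientWins_iff, if_pos hsim2] at hsim
          have hWA : (W \ {x, y}) ∩ A = W ∩ A := sdiff_pair_inter_none hxA hyA
          have hWV : (W \ {x, y}) ∩ V = (W ∩ V) \ {x, y} := sdiff_pair_inter W V x y
          rcases hsim x (Finset.mem_inter.mpr ⟨hx, hxV⟩) y (Finset.mem_inter.mpr ⟨hy, hyV⟩)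
            hxy with hwin | hwin
          · left
            refine ih (W \ {x, y}) (sdiff_pair_ssubset hx) _
              ((Finset.sdiff_subset).trans hWVA)
              (insert_disjoint_sdiff hdis (Or.inl rfl)) ?_ ?_ ?_
            · rcases Finset.mem_union.mp ha₁m with h | h
              · exact Finset.mem_union_left _ (Finset.mem_insert_of_mem h)
              · refine Finset.mem_union_right _ ?_
                rw [hWA]; exact h
            · rw [hWA, Finset.insert_inter_of_notMem hxA]
              exact har
            · rw [hWV, Finset.insert_inter_of_mem hxV]
              exact hwin
          · right
            refine ih (W \ {x, y}) (sdiff_pair_ssubset hx) _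
              ((Finset.sdiff_subset).trans hWVA)
              (insert_disjoint_sdiff hdis (Or.inr rfl)) ?_ ?_ ?_
            · rcases Finset.mem_union.mp ha₁m with h | h
              · exact Finset.mem_union_left _ (Finset.mem_insert_of_mem h)
              · refine Finset.mem_union_right _ ?_
                rw [hWA]; exact h
            · rw [hWA, Finset.insert_inter_of_notMem hyA]
              exact har
            · rw [hWV, Finset.insert_inter_of_mem hyV]
              exact hwin
    · -- terminal position
      rw [if_neg h2]
      have hBle : (W ∩ A).card ≤ W.card := Finset.card_le_card Finset.inter_subset_left
      have hB0 : (W ∩ A).card = 0 := by omega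
      have hBempty : W ∩ A = ∅ := Finset.card_eq_zero.mp hB0
      have hWV : W ∩ V = W := by
        apply Finset.inter_eq_left.mpr
        intro a ha
        rcases Finset.mem_union.mp (hWVA ha) with h | h
        · exact h
        · exact absurd (Finset.mem_inter.mpr ⟨ha, h⟩) (by rw [hBempty]; simp)
      rw [CWClientWins_iff, hWV, if_neg h2] at hsim
      obtain ⟨e, heE, hesub⟩ := hsim
      have hesub' : e ⊆ C' ∪ W :=
        hesub.trans (Finset.union_subset_union Finset.inter_subset_left le_rfl)
      by_cases hcard : m + 1 ≤ e.card
      · exact ⟨e, hE1in e heE hcard, hesub'⟩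
      · have hem : e.card = m := le_antisymm (by omega) (hmin e heE)
        have ha₁C : a₁ ∈ C' := by
          rcases Finset.mem_union.mp ha₁m with h | h
          · exact h
          · rw [hBempty] at h; simp at h
        refine ⟨insert a₁ e, hLin e heE hem, ?_⟩
        rw [Finset.insert_subset_iff]
        exact ⟨Finset.mem_union_left _ ha₁C, hesub'⟩

/-- Cleanup: an augmented-game winning position in which at most one `V`-vertex is unclaimed,
and Client's `A`-vertices are at most half of the claimed `A`-vertices, yields an edge of the
original hypergraph inside Client's `V`-vertices (plus the unclaimed `V`-vertex). -/
lemma cw_cleanup (E E' : Set (Finset α)) (V A : Finset α) (k m : ℕ) (a₁ : α)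
    (hAV : Disjoint A V) (hA : A.card = 2 * (k - 1)) (hk1 : 1 ≤ k)
    (hEV : ∀ e ∈ E, e ⊆ V)
    (hE'out : ∀ f ∈ E', f ∈ E ∨ (∃ e ∈ E, f = insert a₁ e) ∨ (f ⊆ A ∧ f.card = k)) :
    ∀ W C' : Finset α, W ⊆ V ∪ A → Disjoint C' W →
      (W ∩ V).card ≤ 1 → 2 * (C' ∩ A).card + (W ∩ A).card ≤ A.card →
      CWClientWins E' W C' → ∃ e ∈ E, e ⊆ (C' ∩ V) ∪ (W ∩ V) := by
  intro W
  induction W using Finset.strongInduction with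
  | _ W ih =>
    intro C' hWVA hdis hV1 har hwin
    have hWsplit : W ⊆ (W ∩ V) ∪ (W ∩ A) := by
      intro a ha
      rcases Finset.mem_union.mp (hWVA ha) with h | h
      · exact Finset.mem_union_left _ (Finset.mem_inter.mpr ⟨ha, h⟩)
      · exact Finset.mem_union_right _ (Finset.mem_inter.mpr ⟨ha, h⟩)
    have hWcard : W.card ≤ (W ∩ V).card + (W ∩ A).card :=
      (Finset.card_le_card hWsplit).trans (Finset.card_union_le _ _)
    by_cases h2 : 2 ≤ W.card
    · rw [CWClientWins_iff, if_pos h2] at hwin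
      by_cases hB2 : 2 ≤ (W ∩ A).card
      · obtain ⟨a, haWA, b, hbWA, hab⟩ := Finset.one_lt_card.mp hB2
        have haW := (Finset.mem_inter.mp haWA).1
        have haA := (Finset.mem_inter.mp haWA).2
        have hbW := (Finset.mem_inter.mp hbWA).1
        have hbA := (Finset.mem_inter.mp hbWA).2
        have hpair : ({a, b} : Finset α) ⊆ W ∩ A := by
          intro c hc
          rcases Finset.mem_insert.mp hc with rfl | hc
          · exact haWA
          · rw [Finset.mem_singleton] at hc; subst hc; exact hbWA
        have hcard2 : ((W ∩ A) \ {a, b}).card + 2 = (W ∩ A).card := by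
          have := Finset.card_sdiff_add_card_eq_card hpair
          rw [Finset.card_pair hab] at this
          exact this
        have hWA : (W \ {a, b}) ∩ A = (W ∩ A) \ {a, b} := sdiff_pair_inter W A a b
        have hWV : (W \ {a, b}) ∩ V = W ∩ V :=
          sdiff_pair_inter_none (Finset.disjoint_left.mp hAV haA)
            (Finset.disjoint_left.mp hAV hbA)
        rcases hwin a haW b hbW hab with hwin' | hwin'
        · have := ih (W \ {a, b}) (sdiff_pair_ssubset haW) _
            ((Finset.sdiff_subset).trans hWVA)
            (insert_disjoint_sdiff hdis (Or.inl rfl))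
            (by rw [hWV]; exact hV1)
            (by rw [hWA, insert_inter_card hdis haW haA]; omega) hwin'
          rw [hWV, Finset.insert_inter_of_notMem (Finset.disjoint_left.mp hAV haA)] at this
          exact this
        · have := ih (W \ {a, b}) (sdiff_pair_ssubset haW) _
            ((Finset.sdiff_subset).trans hWVA)
            (insert_disjoint_sdiff hdis (Or.inr rfl))
            (by rw [hWV]; exact hV1)
            (by rw [hWA, insert_inter_card hdis hbW hbA]; omega) hwin'
          rw [hWV, Finset.insert_inter_of_notMem (Finset.disjoint_left.mp hAV hbA)] at this
          exact this
      · -- exactly one unclaimed A-vertex and one unclaimed V-vertex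
        have hB1 : (W ∩ A).card = 1 := by omega
        have hV1' : (W ∩ V).card = 1 := by omega
        obtain ⟨u, hu⟩ := Finset.card_eq_one.mp hV1'
        obtain ⟨b, hb⟩ := Finset.card_eq_one.mp hB1
        have huW : u ∈ W := (Finset.mem_inter.mp (hu ▸ Finset.mem_singleton_self u)).1
        have huV : u ∈ V := (Finset.mem_inter.mp (hu ▸ Finset.mem_singleton_self u)).2
        have hbW : b ∈ W := (Finset.mem_inter.mp (hb ▸ Finset.mem_singleton_self b)).1
        have hbA : b ∈ A := (Finset.mem_inter.mp (hb ▸ Finset.mem_singleton_self b)).2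
        have hub : u ≠ b := fun h => Finset.disjoint_left.mp hAV hbA (h ▸ huV)
        have hWempty : W \ {u, b} = ∅ := by
          rw [Finset.sdiff_eq_empty_iff_subset]
          intro a ha
          rcases Finset.mem_union.mp (hWsplit ha) with h | h
          · rw [hu] at h; rw [Finset.mem_singleton] at h; subst h; simp
          · rw [hb] at h; rw [Finset.mem_singleton] at h; subst h; simp
        have huA : u ∉ A := Finset.disjoint_right.mp hAV huV
        have hbV : b ∉ V := Finset.disjoint_left.mp hAV hbA
        rcases hwin u huW b hbW hub with hwin' | hwin'
        · rw [hWempty, CWClientWins_iff, if_neg (by simp)] at hwin'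
          obtain ⟨f, hfE', hfsub⟩ := hwin'
          rw [Finset.union_empty] at hfsub
          rcases hE'out f hfE' with hf | ⟨e, heE, rfl⟩ | ⟨hfA, hfk⟩
          · refine ⟨f, hf, fun c hc => ?_⟩
            have hcV : c ∈ V := hEV f hf hc
            rcases Finset.mem_insert.mp (hfsub hc) with rfl | h
            · exact Finset.mem_union_right _ (Finset.mem_inter.mpr ⟨huW, hcV⟩)
            · exact Finset.mem_union_left _ (Finset.mem_inter.mpr ⟨h, hcV⟩)
          · refine ⟨e, heE, fun c hc => ?_⟩
            have hcV : c ∈ V := hEV e heE hc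
            have hc' : c ∈ insert u C' := hfsub (Finset.mem_insert_of_mem hc)
            rcases Finset.mem_insert.mp hc' with rfl | h
            · exact Finset.mem_union_right _ (Finset.mem_inter.mpr ⟨huW, hcV⟩)
            · exact Finset.mem_union_left _ (Finset.mem_inter.mpr ⟨h, hcV⟩)
          · exfalso
            have : f ⊆ C' ∩ A := by
              intro c hc
              have hcA := hfA hc
              rcases Finset.mem_insert.mp (hfsub hc) with rfl | h
              · exact absurd hcA huA
              · exact Finset.mem_inter.mpr ⟨h, hcA⟩
            have := Finset.card_le_card this
            omega
        · rw [hWempty, CWClientWins_iff, if_neg (by simp)] at hwin'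
          obtain ⟨f, hfE', hfsub⟩ := hwin'
          rw [Finset.union_empty] at hfsub
          rcases hE'out f hfE' with hf | ⟨e, heE, rfl⟩ | ⟨hfA, hfk⟩
          · refine ⟨f, hf, fun c hc => ?_⟩
            have hcV : c ∈ V := hEV f hf hc
            rcases Finset.mem_insert.mp (hfsub hc) with rfl | h
            · exact absurd hcV hbV
            · exact Finset.mem_union_left _ (Finset.mem_inter.mpr ⟨h, hcV⟩)
          · refine ⟨e, heE, fun c hc => ?_⟩
            have hcV : c ∈ V := hEV e heE hc
            have hc' : c ∈ insert b C' := hfsub (Finset.mem_insert_of_mem hc)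
            rcases Finset.mem_insert.mp hc' with rfl | h
            · exact absurd hcV hbV
            · exact Finset.mem_union_left _ (Finset.mem_inter.mpr ⟨h, hcV⟩)
          · exfalso
            have hsub : f ⊆ insert b (C' ∩ A) := by
              intro c hc
              have hcA := hfA hc
              rcases Finset.mem_insert.mp (hfsub hc) with rfl | h
              · exact Finset.mem_insert_self _ _
              · exact Finset.mem_insert_of_mem (Finset.mem_inter.mpr ⟨h, hcA⟩)
            have h5 := (Finset.card_le_card hsub).trans (Finset.card_insert_le _ _)
            omega
    · -- terminal
      rw [CWClientWins_iff, if_neg h2] at hwin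
      obtain ⟨f, hfE', hfsub⟩ := hwin
      have hBle : (W ∩ A).card ≤ W.card := Finset.card_le_card Finset.inter_subset_left
      rcases hE'out f hfE' with hf | ⟨e, heE, rfl⟩ | ⟨hfA, hfk⟩
      · refine ⟨f, hf, fun c hc => ?_⟩
        have hcV : c ∈ V := hEV f hf hc
        rcases Finset.mem_union.mp (hfsub hc) with h | h
        · exact Finset.mem_union_left _ (Finset.mem_inter.mpr ⟨h, hcV⟩)
        · exact Finset.mem_union_right _ (Finset.mem_inter.mpr ⟨h, hcV⟩)
      · refine ⟨e, heE, fun c hc => ?_⟩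
        have hcV : c ∈ V := hEV e heE hc
        rcases Finset.mem_union.mp (hfsub (Finset.mem_insert_of_mem hc)) with h | h
        · exact Finset.mem_union_left _ (Finset.mem_inter.mpr ⟨h, hcV⟩)
        · exact Finset.mem_union_right _ (Finset.mem_inter.mpr ⟨h, hcV⟩)
      · exfalso
        have hsub : f ⊆ (C' ∩ A) ∪ (W ∩ A) := by
          intro c hc
          have hcA := hfA hc
          rcases Finset.mem_union.mp (hfsub hc) with h | h
          · exact Finset.mem_union_left _ (Finset.mem_inter.mpr ⟨h, hcA⟩)
          · exact Finset.mem_union_right _ (Finset.mem_inter.mpr ⟨h, hcA⟩)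
        have h5 := (Finset.card_le_card hsub).trans (Finset.card_union_le _ _)
        omega

/-- Backward simulation: if Client wins the augmented game, he wins the original game. -/
lemma cw_bwd (E E' : Set (Finset α)) (V A : Finset α) (k m : ℕ) (a₁ : α)
    (hAV : Disjoint A V) (hA : A.card = 2 * (k - 1)) (hk1 : 1 ≤ k)
    (hEV : ∀ e ∈ E, e ⊆ V)
    (hE'out : ∀ f ∈ E', f ∈ E ∨ (∃ e ∈ E, f = insert a₁ e) ∨ (f ⊆ A ∧ f.card = k)) :
    ∀ W C' : Finset α, W ⊆ V → C' ∩ A = ∅ → Disjoint C' (W ∪ A) →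
      CWClientWins E' (W ∪ A) C' → CWClientWins E W (C' ∩ V) := by
  intro W
  induction W using Finset.strongInduction with
  | _ W ih =>
    intro C' hWV hCA hdis hwin
    rw [CWClientWins_iff]
    by_cases h2 : 2 ≤ W.card
    · rw [if_pos h2]
      intro x hx y hy hxy
      have hxV : x ∈ V := hWV hx
      have hyV : y ∈ V := hWV hy
      have hxA : x ∉ A := Finset.disjoint_right.mp hAV hxV
      have hyA : y ∉ A := Finset.disjoint_right.mp hAV hyV
      have h2' : 2 ≤ (W ∪ A).card := h2.trans (Finset.card_le_card Finset.subset_union_left)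
      rw [CWClientWins_iff, if_pos h2'] at hwin
      have hrw : (W ∪ A) \ {x, y} = (W \ {x, y}) ∪ A := by
        rw [Finset.union_sdiff_distrib]
        congr 1
        rw [Finset.sdiff_eq_self_iff_disjoint]
        rw [Finset.disjoint_left]
        intro a ha hb
        rcases Finset.mem_insert.mp hb with rfl | hb
        · exact hxA ha
        · rw [Finset.mem_singleton] at hb; subst hb; exact hyA ha
      have hdis' : ∀ c, c = x ∨ c = y → Disjoint (insert c C') ((W \ {x, y}) ∪ A) := by
        intro c hc
        rw [← hrw]
        exact insert_disjoint_sdiff hdis hc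
      rcases hwin x (Finset.mem_union_left _ hx) y (Finset.mem_union_left _ hy) hxy
        with hwin' | hwin'
      · left
        rw [hrw] at hwin'
        have := ih (W \ {x, y}) (sdiff_pair_ssubset hx) _
          ((Finset.sdiff_subset).trans hWV)
          (by rw [Finset.insert_inter_of_notMem hxA]; exact hCA)
          (hdis' x (Or.inl rfl)) hwin'
        rwa [Finset.insert_inter_of_mem hxV] at this
      · right
        rw [hrw] at hwin'
        have := ih (W \ {x, y}) (sdiff_pair_ssubset hx) _
          ((Finset.sdiff_subset).trans hWV)
          (by rw [Finset.insert_inter_of_notMem hyA]; exact hCA)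
          (hdis' y (Or.inr rfl)) hwin'
        rwa [Finset.insert_inter_of_mem hyV] at this
    · rw [if_neg h2]
      have hWA : (W ∪ A) ∩ A = A := Finset.inter_eq_right.mpr Finset.subset_union_right
      have hWVi : (W ∪ A) ∩ V = W := by
        ext a
        simp only [Finset.mem_inter, Finset.mem_union]
        constructor
        · rintro ⟨h | h, hV⟩
          · exact h
          · exact absurd hV (Finset.disjoint_left.mp hAV h)
        · intro h
          exact ⟨Or.inl h, hWV h⟩
      have := cw_cleanup E E' V A k m a₁ hAV hA hk1 hEV hE'out (W ∪ A) C'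
        (Finset.union_subset_union hWV le_rfl)
        hdis
        (by rw [hWVi]; omega)
        (by rw [hWA, hCA]; simp)
        hwin
      rw [hWVi] at this
      exact this

/-- Uniformization step for Client-Waiter games.  Let `H = (V, E)` be a hypergraph of rank `k`
with minimum edge size `m < k`.  Add `2 * (k - 1)` new vertices `A`, let `U` be the set of all
`k`-element subsets of `A`, let `L` consist of the edges of size `m` each augmented by a fixed
new vertex `a₁ ∈ A`, and let `E'` be the edges of `E` of size at least `m + 1` together with
`L` and `U`.  Then `H' = (V ∪ A, E')` has rank `k`, all its edges have size at least `m + 1`,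
and Client wins the Client-Waiter game on `H` if and only if he wins it on `H'`. -/
theorem cw_uniformization (V : Finset α) (E : Set (Finset α)) (k m : ℕ)
    (hEV : ∀ e ∈ E, e ⊆ V) (hrank : ∀ e ∈ E, e.card ≤ k)
    (hmin : ∀ e ∈ E, m ≤ e.card) (hex : ∃ e ∈ E, e.card = m) (hmk : m < k)
    (A : Finset α) (hA : A.card = 2 * (k - 1)) (hAV : Disjoint A V)
    (a₁ : α) (ha₁ : a₁ ∈ A) :
    (∀ e ∈ ({e | e ∈ E ∧ m + 1 ≤ e.card} ∪ {f | ∃ e ∈ E, e.card = m ∧ f = insert a₁ e} ∪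
        {f : Finset α | f ⊆ A ∧ f.card = k} : Set (Finset α)), e.card ≤ k) ∧
    (∀ e ∈ ({e | e ∈ E ∧ m + 1 ≤ e.card} ∪ {f | ∃ e ∈ E, e.card = m ∧ f = insert a₁ e} ∪
        {f : Finset α | f ⊆ A ∧ f.card = k} : Set (Finset α)), m + 1 ≤ e.card) ∧
    (CWClientWins E V ∅ ↔
      CWClientWins
        ({e | e ∈ E ∧ m + 1 ≤ e.card} ∪ {f | ∃ e ∈ E, e.card = m ∧ f = insert a₁ e} ∪
          {f : Finset α | f ⊆ A ∧ f.card = k}) (V ∪ A) ∅) := by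
  set E' : Set (Finset α) :=
    {e | e ∈ E ∧ m + 1 ≤ e.card} ∪ {f | ∃ e ∈ E, e.card = m ∧ f = insert a₁ e} ∪
      {f : Finset α | f ⊆ A ∧ f.card = k} with hE'def
  have hk1 : 1 ≤ k := by omega
  have hmem : ∀ f : Finset α, f ∈ E' ↔
      (f ∈ E ∧ m + 1 ≤ f.card) ∨ (∃ e ∈ E, e.card = m ∧ f = insert a₁ e) ∨
        (f ⊆ A ∧ f.card = k) := by
    intro f
    simp only [hE'def, Set.mem_union, Set.mem_setOf_eq, or_assoc]
  have hUin : ∀ f : Finset α, f ⊆ A → f.card = k → f ∈ E' :=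
    fun f hf hc => (hmem f).mpr (Or.inr (Or.inr ⟨hf, hc⟩))
  have hE1in : ∀ e ∈ E, m + 1 ≤ e.card → e ∈ E' :=
    fun e he hc => (hmem e).mpr (Or.inl ⟨he, hc⟩)
  have hLin : ∀ e ∈ E, e.card = m → insert a₁ e ∈ E' :=
    fun e he hc => (hmem (insert a₁ e)).mpr (Or.inr (Or.inl ⟨e, he, hc, rfl⟩))
  have hE'out : ∀ f ∈ E', f ∈ E ∨ (∃ e ∈ E, f = insert a₁ e) ∨ (f ⊆ A ∧ f.card = k) := by
    intro f hf
    rcases (hmem f).mp hf with ⟨h1, _⟩ | ⟨e, he, _, rfl⟩ | h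
    · exact Or.inl h1
    · exact Or.inr (Or.inl ⟨e, he, rfl⟩)
    · exact Or.inr (Or.inr h)
  refine ⟨?_, ?_, ?_⟩
  · intro f hf
    rcases (hmem f).mp hf with ⟨h1, _⟩ | ⟨e, he, hc, rfl⟩ | ⟨_, h⟩
    · exact hrank f h1
    · have := Finset.card_insert_le a₁ e
      omega
    · omega
  · intro f hf
    rcases (hmem f).mp hf with ⟨_, h1⟩ | ⟨e, he, hc, rfl⟩ | ⟨_, h⟩
    · exact h1
    · have ha₁e : a₁ ∉ e := fun h => Finset.disjoint_left.mp hAV ha₁ (hEV e he h)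
      rw [Finset.card_insert_of_notMem ha₁e]
      omega
    · omega
  · constructor
    · intro h
      refine cw_fwd E E' V A k m a₁ hAV hA hk1 hmin hUin hE1in hLin (V ∪ A) ∅
        le_rfl (by simp) ?_ ?_ ?_
      · refine Finset.mem_union_right _ ?_
        rw [Finset.inter_eq_right.mpr Finset.subset_union_right]
        exact ha₁
      · rw [Finset.inter_eq_right.mpr Finset.subset_union_right]
        simp
      · rw [Finset.inter_eq_right.mpr ?_]
        · rw [Finset.empty_inter]
          exact h
        · exact Finset.subset_union_left
    · intro h
      have := cw_bwd E E' V A k m a₁ hAV hA hk1 hEV hE'out V ∅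
        le_rfl (by simp) (by simp) h
      rwa [Finset.empty_inter] at this
end
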